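/- arXiv:1706.00408 — 9 statements merged into one kernel-verified Lean document; each statement's English description precedes it below -/
import Mathlib

section
/- Let E be a real normed vector space, let ℓ, K, κ, M, C₀, T > 0 and let ε ∈ (0, T]. Let A : ℝ × E → ℝ satisfy |A(z, y) − A(z', y')| ≤ ℓ(|z − z'| + ‖y − y'‖) for all z, z' ∈ ℝ and y, y' ∈ E. Suppose z, 𝔷 : [0, T/ε] → ℝ are differentiable with z(0) = 𝔷(0), z'(t) = ε A(z(t), y(t)) and 𝔷'(t) = ε A(𝔷(t), 0) for all t ∈ [0, T/ε], where y : [0, T/ε] → E satisfies ‖y(t)‖ ≤ K e^{−κ t} M + C₀ ε for all t. Then |z(t) − 𝔷(t)| ≤ ℓ (K M / κ + C₀ T) e^{ℓ T} · ε for all t ∈ [0, T/ε]. In particular the bound has the form C' ε with C' independent of ε. -/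
/-- The exponential-equivalence estimate (equation (3.2) of the paper):
the projection `z` of the singularly perturbed delay equation onto the critical
one-dimensional eigenspace is `ε`-close on `[0, T/ε]` to the solution `𝔷` of the
reduced one-dimensional equation obtained by setting the transverse component `y` to zero. -/
theorem stmt_0 {E : Type*} [NormedAddCommGroup E] [NormedSpace ℝ E]
    (ℓ K κ M C₀ T ε : ℝ)
    (hℓ : 0 < ℓ) (hK : 0 < K) (hκ : 0 < κ) (hM : 0 < M) (hC₀ : 0 < C₀) (hT : 0 < T)
    (hε : ε ∈ Set.Ioc (0 : ℝ) T)
    (A : ℝ × E → ℝ)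
    (hA : ∀ z z' : ℝ, ∀ y y' : E, |A (z, y) - A (z', y')| ≤ ℓ * (|z - z'| + ‖y - y'‖))
    (z 𝔷 : ℝ → ℝ) (y : ℝ → E)
    (hinit : z 0 = 𝔷 0)
    (hz : ∀ t ∈ Set.Icc (0 : ℝ) (T / ε), HasDerivAt z (ε * A (z t, y t)) t)
    (h𝔷 : ∀ t ∈ Set.Icc (0 : ℝ) (T / ε), HasDerivAt 𝔷 (ε * A (𝔷 t, 0)) t)
    (hy : ∀ t ∈ Set.Icc (0 : ℝ) (T / ε), ‖y t‖ ≤ K * Real.exp (-κ * t) * M + C₀ * ε) :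
    ∀ t ∈ Set.Icc (0 : ℝ) (T / ε),
      |z t - 𝔷 t| ≤ ℓ * (K * M / κ + C₀ * T) * Real.exp (ℓ * T) * ε := by
  obtain ⟨hε0, hεT⟩ := hε
  set c := ε * ℓ with hc_def
  have hc : 0 < c := mul_pos hε0 hℓ
  set a := c * K * M / κ with ha_def
  have ha0 : 0 < a := by positivity
  set b := C₀ * ε with hb_def
  have hb0 : 0 < b := by positivity
  set B : ℝ → ℝ := fun s => a * (Real.exp (c * s) - Real.exp (-κ * s)) +
      b * (Real.exp (c * s) - 1) with hB_def
  set B' : ℝ → ℝ := fun s => a * (Real.exp (c * s) * c - Real.exp (-κ * s) * (-κ)) +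
      b * (Real.exp (c * s) * c - 0) with hB'_def
  have hBderiv : ∀ x : ℝ, HasDerivAt B (B' x) x := by
    intro x
    have hid1 : HasDerivAt (fun s : ℝ => c * s) c x := by
      simpa using HasDerivAt.const_mul c (hasDerivAt_id x)
    have hid2 : HasDerivAt (fun s : ℝ => -κ * s) (-κ) x := by
      simpa using HasDerivAt.const_mul (-κ) (hasDerivAt_id x)
    have h1 : HasDerivAt (fun s : ℝ => Real.exp (c * s)) (Real.exp (c * x) * c) x := hid1.exp
    have h2 : HasDerivAt (fun s : ℝ => Real.exp (-κ * s)) (Real.exp (-κ * x) * (-κ)) x :=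
      hid2.exp
    exact (HasDerivAt.const_mul a (h1.sub h2)).add
      (HasDerivAt.const_mul b (h1.sub (hasDerivAt_const x (1:ℝ))))
  have hf : ContinuousOn (fun s => z s - 𝔷 s) (Set.Icc 0 (T / ε)) := by
    intro x hx
    exact ((hz x hx).sub (h𝔷 x hx)).continuousAt.continuousWithinAt
  have hf' : ∀ x ∈ Set.Ico (0:ℝ) (T / ε),
      HasDerivWithinAt (fun s => z s - 𝔷 s)
        ((fun s => ε * A (z s, y s) - ε * A (𝔷 s, 0)) x) (Set.Ici x) x := by
    intro x hx
    have hx' : x ∈ Set.Icc (0:ℝ) (T / ε) := ⟨hx.1, hx.2.le⟩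
    exact ((hz x hx').sub (h𝔷 x hx')).hasDerivWithinAt
  have ha_init : ‖z 0 - 𝔷 0‖ ≤ B 0 := by
    simp [B, hinit]
  have bound : ∀ x ∈ Set.Ico (0:ℝ) (T / ε), ‖z x - 𝔷 x‖ = B x →
      ‖ε * A (z x, y x) - ε * A (𝔷 x, 0)‖ < B' x := by
    intro x hx hfx
    have hx' : x ∈ Set.Icc (0:ℝ) (T / ε) := ⟨hx.1, hx.2.le⟩
    have hAx := hA (z x) (𝔷 x) (y x) 0
    have hyx := hy x hx'
    have h1 : ‖ε * A (z x, y x) - ε * A (𝔷 x, 0)‖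
        = ε * |A (z x, y x) - A (𝔷 x, 0)| := by
      rw [← mul_sub, Real.norm_eq_abs, abs_mul, abs_of_pos hε0]
    rw [h1]
    rw [Real.norm_eq_abs] at hfx
    rw [sub_zero] at hAx
    have hexp1 : 0 < Real.exp (c * x) := Real.exp_pos _
    have hexp2 : 0 < Real.exp (-κ * x) := Real.exp_pos _
    have haκ : a * κ = c * K * M := by
      rw [ha_def]; field_simp
    have step : ε * |A (z x, y x) - A (𝔷 x, 0)|
        ≤ c * (B x + K * Real.exp (-κ * x) * M + C₀ * ε) := by
      have h2 : |A (z x, y x) - A (𝔷 x, 0)|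
          ≤ ℓ * (B x + (K * Real.exp (-κ * x) * M + C₀ * ε)) := by
        calc |A (z x, y x) - A (𝔷 x, 0)| ≤ ℓ * (|z x - 𝔷 x| + ‖y x‖) := hAx
          _ ≤ ℓ * (B x + (K * Real.exp (-κ * x) * M + C₀ * ε)) := by
              rw [hfx]; exact mul_le_mul_of_nonneg_left (by linarith [hyx]) hℓ.le
      calc ε * |A (z x, y x) - A (𝔷 x, 0)|
          ≤ ε * (ℓ * (B x + (K * Real.exp (-κ * x) * M + C₀ * ε))) :=
            mul_le_mul_of_nonneg_left h2 hε0.le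
        _ = c * (B x + K * Real.exp (-κ * x) * M + C₀ * ε) := by rw [hc_def]; ring
    refine lt_of_le_of_lt step ?_
    have hdiff : B' x - c * B x
        = a * κ * Real.exp (-κ * x) + a * c * Real.exp (-κ * x) + b * c := by
      simp only [hB_def, hB'_def]; ring
    have hpos : 0 < a * c * Real.exp (-κ * x) := by positivity
    have hbc : b * c = c * (C₀ * ε) := by rw [hb_def]; ring
    nlinarith [hpos, hdiff, haκ, hbc]
  have key := image_norm_le_of_norm_deriv_right_lt_deriv_boundary hf hf' ha_init hBderiv bound
  intro t ht
  have hkey := key ht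
  rw [Real.norm_eq_abs] at hkey
  refine hkey.trans ?_
  have ht0 : 0 ≤ t := ht.1
  have hεt : ε * t ≤ T := by
    calc ε * t ≤ ε * (T / ε) := mul_le_mul_of_nonneg_left ht.2 hε0.le
      _ = T := by field_simp
  have hct : c * t ≤ ℓ * T := by
    calc c * t = ℓ * (ε * t) := by rw [hc_def]; ring
      _ ≤ ℓ * T := mul_le_mul_of_nonneg_left hεt hℓ.le
  have hexpmono : Real.exp (c * t) ≤ Real.exp (ℓ * T) := Real.exp_le_exp.mpr hct
  have hexp1 : 0 < Real.exp (c * t) := Real.exp_pos _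
  have hexpT : 0 < Real.exp (ℓ * T) := Real.exp_pos _
  have hexp2 : 0 < Real.exp (-κ * t) := Real.exp_pos _
  have hct0 : 0 ≤ c * t := by positivity
  have hem1 : Real.exp (c * t) - 1 ≤ (c * t) * Real.exp (c * t) := by
    have h := mul_le_mul_of_nonneg_right (Real.add_one_le_exp (-(c * t))) hexp1.le
    rw [← Real.exp_add] at h
    simp only [neg_add_cancel, Real.exp_zero] at h
    nlinarith [h]
  have hprod : (c * t) * Real.exp (c * t) ≤ (ℓ * T) * Real.exp (ℓ * T) :=
    mul_le_mul hct hexpmono hexp1.le (by positivity)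
  have term1 : a * (Real.exp (c * t) - Real.exp (-κ * t))
      ≤ (c * K * M / κ) * Real.exp (ℓ * T) := by
    rw [← ha_def]
    exact mul_le_mul_of_nonneg_left (by linarith) ha0.le
  have term2 : b * (Real.exp (c * t) - 1) ≤ (C₀ * ε) * (ℓ * T * Real.exp (ℓ * T)) := by
    rw [← hb_def]
    exact mul_le_mul_of_nonneg_left (by linarith) hb0.le
  have hfin : (c * K * M / κ) * Real.exp (ℓ * T) + (C₀ * ε) * (ℓ * T * Real.exp (ℓ * T))
      = ℓ * (K * M / κ + C₀ * T) * Real.exp (ℓ * T) * ε := by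
    rw [hc_def]; field_simp
  calc B t = a * (Real.exp (c * t) - Real.exp (-κ * t)) + b * (Real.exp (c * t) - 1) := rfl
    _ ≤ (c * K * M / κ) * Real.exp (ℓ * T) + (C₀ * ε) * (ℓ * T * Real.exp (ℓ * T)) := by
        linarith
    _ = ℓ * (K * M / κ + C₀ * T) * Real.exp (ℓ * T) * ε := hfin
end

section
/- Let C, K, κ, M, T > 0 and ε > 0. Suppose h : [0, T/ε] → ℝ is continuous, nonnegative, and satisfies h(t) ≤ C ε ∫₀ᵗ ( h(s) + K e^{−κ s} M + C ε ) ds for all t ∈ [0, T/ε]. Then h(t) ≤ C (K M / κ + C T) e^{C T} · ε for all t ∈ [0, T/ε]. -/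
/-!
Put `F(t) = ∫₀ᵗ h`. Integrating the decaying forcing exactly, `∫₀ᵗ K e^{-κs} M ≤ K M / κ`, and
`C ε t ≤ C T` on `[0, T/ε]`, so the hypothesis becomes `h ≤ B + C ε F` with
`B = C ε (K M / κ + C T)`. Since `F' = h`, the differential Grönwall inequality bounds `F`, hence
`h(t) ≤ B e^{C ε t} ≤ B e^{C T}`: the small rate `C ε` exactly compensates the long horizon `T/ε`.
-/

open Set Real intervalIntegral Filter Topology

section Gronwall

variable {h : ℝ → ℝ} {a b : ℝ}

theorem continuousOn_primitive_of_continuousOn (hcont : ContinuousOn h (Icc a b)) :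
    ContinuousOn (fun u => ∫ s in a..u, h s) (Icc a b) :=
  (continuousOn_primitive hcont.integrableOn_Icc).congr fun _ hu =>
    integral_of_le hu.1

theorem hasDerivWithinAt_primitive_of_continuousOn (hcont : ContinuousOn h (Icc a b)) {t : ℝ}
    (ht : t ∈ Ico a b) : HasDerivWithinAt (fun u => ∫ s in a..u, h s) (h t) (Ici t) t := by
  have hmem : Icc a b ∈ 𝓝[>] t :=
    mem_of_superset (Ioc_mem_nhdsGT ht.2) fun _ hu => ⟨ht.1.trans hu.1.le, hu.2⟩
  refine integral_hasDerivWithinAt_right ?_ ⟨Icc a b, hmem, hcont.aestronglyMeasurable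
    measurableSet_Icc⟩ ((hcont t (Ico_subset_Icc_self ht)).mono_of_mem_nhdsWithin hmem)
  exact (hcont.mono (uIcc_of_le ht.1 ▸ Icc_subset_Icc_right ht.2.le)).intervalIntegrable

theorem le_mul_exp_of_le_add_mul_integral {B L : ℝ} (hL : 0 ≤ L)
    (hcont : ContinuousOn h (Icc a b)) (hineq : ∀ t ∈ Icc a b, h t ≤ B + L * ∫ s in a..t, h s) :
    ∀ t ∈ Icc a b, h t ≤ B * exp (L * (t - a)) := by
  intro t ht
  rcases hL.eq_or_lt with rfl | hL
  · simpa using hineq t ht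
  have hF : (∫ s in a..t, h s) ≤ gronwallBound 0 L B (t - a) :=
    le_gronwallBound_of_liminf_deriv_right_le (continuousOn_primitive_of_continuousOn hcont)
      (fun x hx _ hr =>
        (hasDerivWithinAt_primitive_of_continuousOn hcont hx).liminf_right_slope_le hr)
      integral_same.le (fun x hx => by linarith [hineq x (Ico_subset_Icc_self hx)]) t ht
  rw [gronwallBound_of_K_ne_0 hL.ne'] at hF
  calc h t ≤ B + L * (0 * exp (L * (t - a)) + B / L * (exp (L * (t - a)) - 1)) := by
        linarith [hineq t ht, mul_le_mul_of_nonneg_left hF hL.le]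
    _ = B * exp (L * (t - a)) := by field_simp; ring

end Gronwall

theorem integral_exp_neg_mul (κ t : ℝ) (hκ : κ ≠ 0) :
    ∫ s in (0 : ℝ)..t, exp (-κ * s) = (1 - exp (-κ * t)) / κ := by
  rw [integral_comp_mul_left (fun s => exp s) (neg_ne_zero.2 hκ), integral_exp]
  simp only [mul_zero, exp_zero, smul_eq_mul]
  field_simp
  ring

theorem integral_add_exp_forcing_le {h : ℝ → ℝ} {K M κ c t : ℝ} (hKM : 0 ≤ K * M) (hκ : 0 < κ)
    (hh : IntervalIntegrable h MeasureTheory.volume 0 t) :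
    ∫ s in (0 : ℝ)..t, (h s + K * exp (-κ * s) * M + c) ≤
      (∫ s in (0 : ℝ)..t, h s) + (K * M / κ + c * t) := by
  have hexp : IntervalIntegrable (fun s => K * exp (-κ * s) * M) MeasureTheory.volume 0 t :=
    (by fun_prop : Continuous fun s => K * exp (-κ * s) * M).intervalIntegrable _ _
  have hdecay : (∫ s in (0 : ℝ)..t, K * exp (-κ * s) * M) ≤ K * M / κ := by
    simp_rw [mul_right_comm K, integral_const_mul, integral_exp_neg_mul κ t hκ.ne',
      ← mul_one_div (K * M) κ]
    gcongr
    linarith [exp_pos (-κ * t)]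
  rw [integral_add (hh.add hexp) intervalIntegrable_const, integral_add hh hexp,
    integral_const, smul_eq_mul, sub_zero]
  linarith

theorem stmt_1_general (C K κ M T ε : ℝ)
    (hC : 0 < C) (hK : 0 < K) (hκ : 0 < κ) (hM : 0 < M) (hε : 0 < ε)
    (h : ℝ → ℝ)
    (hcont : ContinuousOn h (Set.Icc 0 (T / ε)))
    (hineq : ∀ t ∈ Set.Icc (0 : ℝ) (T / ε),
      h t ≤ C * ε * ∫ s in (0 : ℝ)..t, (h s + K * Real.exp (-κ * s) * M + C * ε)) :
    ∀ t ∈ Set.Icc (0 : ℝ) (T / ε),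
      h t ≤ C * (K * M / κ + C * T) * Real.exp (C * T) * ε := by
  have hεt : ∀ t ∈ Icc (0 : ℝ) (T / ε), C * ε * t ≤ C * T := fun t ht => by
    rw [mul_assoc]; gcongr; exact (le_div_iff₀' hε).1 ht.2
  have hreduced : ∀ t ∈ Icc (0 : ℝ) (T / ε),
      h t ≤ C * ε * (K * M / κ + C * T) + C * ε * ∫ s in (0 : ℝ)..t, h s := fun t ht => by
    have hh : IntervalIntegrable h MeasureTheory.volume 0 t :=
      (hcont.mono (Icc_subset_Icc_right ht.2)).intervalIntegrable_of_Icc ht.1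
    calc h t ≤ C * ε * ((∫ s in (0 : ℝ)..t, h s) + (K * M / κ + C * ε * t)) := by
          grw [hineq t ht, integral_add_exp_forcing_le (by positivity) hκ hh]
      _ ≤ C * ε * ((∫ s in (0 : ℝ)..t, h s) + (K * M / κ + C * T)) := by
          gcongr C * ε * (_ + (_ + ?_)); exact hεt t ht
      _ = _ := by ring
  intro t ht
  have hCT : 0 ≤ C * T := (mul_nonneg (by positivity) ht.1).trans (hεt t ht)
  have hB : 0 ≤ C * ε * (K * M / κ + C * T) :=
    mul_nonneg (by positivity) (add_nonneg (by positivity) hCT)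
  calc h t ≤ C * ε * (K * M / κ + C * T) * exp (C * ε * (t - 0)) :=
        le_mul_exp_of_le_add_mul_integral (by positivity) hcont hreduced t ht
    _ ≤ C * ε * (K * M / κ + C * T) * exp (C * T) := by
        rw [sub_zero]; gcongr _ * exp ?_; exact hεt t ht
    _ = C * (K * M / κ + C * T) * exp (C * T) * ε := by ring

/-- A Gronwall-type estimate on the long time interval `[0, T/ε]`:
an integral inequality with exponentially decaying forcing `K e^{-κ s} M` plus a small
constant `C ε` yields a bound of order `ε`, uniformly on `[0, T/ε]`. -/
theorem stmt_1 (C K κ M T ε : ℝ)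
    (hC : 0 < C) (hK : 0 < K) (hκ : 0 < κ) (hM : 0 < M) (hT : 0 < T) (hε : 0 < ε)
    (h : ℝ → ℝ)
    (hcont : ContinuousOn h (Set.Icc 0 (T / ε)))
    (hnonneg : ∀ t ∈ Set.Icc (0 : ℝ) (T / ε), 0 ≤ h t)
    (hineq : ∀ t ∈ Set.Icc (0 : ℝ) (T / ε),
      h t ≤ C * ε * ∫ s in (0 : ℝ)..t, (h s + K * Real.exp (-κ * s) * M + C * ε)) :
    ∀ t ∈ Set.Icc (0 : ℝ) (T / ε),
      h t ≤ C * (K * M / κ + C * T) * Real.exp (C * T) * ε :=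
  stmt_1_general C K κ M T ε hC hK hκ hM hε h hcont hineq
end

section
/- Let r, T > 0, let n be a positive integer, let L₀ : C([−r, 0]; ℝⁿ) → ℝⁿ be a continuous linear map, let η ∈ C([−r, 0]; ℝⁿ), and let ψ : [0, T] → ℝⁿ be continuous with ψ(0) = 0. Then there exists a unique continuous function v : [−r, T] → ℝⁿ such that v(θ) = η(θ) for all θ ∈ [−r, 0] and v(t) = η(0) + ∫₀ᵗ L₀(Π_s v) ds + ψ(t) for all t ∈ [0, T]. -/
/-- The segment extractor: for `v : C(ℝ, E)` and `s : ℝ`, `(seg r v s) θ = v (s + θ)`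
for `θ ∈ [-r, 0]`, i.e. `seg r v s = Π_s v ∈ C([-r,0]; E)`. -/
noncomputable def seg {E : Type*} [TopologicalSpace E] (r : ℝ) (v : C(ℝ, E)) (s : ℝ) :
    C(Set.Icc (-r) (0 : ℝ), E) :=
  v.comp ⟨fun θ => s + θ.1, by continuity⟩

open Set Function intervalIntegral

section Aux
set_option linter.unusedSectionVars false

variable {E : Type*} [NormedAddCommGroup E] [NormedSpace ℝ E] [CompleteSpace E]

lemma continuous_seg (r : ℝ) (v : C(ℝ, E)) : Continuous (seg r v) := by
  have : seg r v = fun s => (ContinuousMap.curry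
      (v.comp ⟨fun p : ℝ × Icc (-r) (0:ℝ) => p.1 + p.2.1, by continuity⟩)) s := by
    funext s; ext θ; rfl
  rw [this]
  exact (ContinuousMap.curry _).continuous

lemma continuous_L_seg (r : ℝ) (L₀ : C(Icc (-r) (0:ℝ), E) →L[ℝ] E) (v : C(ℝ, E)) :
    Continuous fun s => L₀ (seg r v s) := L₀.continuous.comp (continuous_seg r v)

noncomputable def Phi (r T : ℝ) (h0 : -r ≤ (0:ℝ)) (h1 : (0:ℝ) ≤ T) (hrT : -r ≤ T)
    (L₀ : C(Icc (-r) (0:ℝ), E) →L[ℝ] E) (η : C(Icc (-r) (0:ℝ), E)) (ψ : C(Icc (0:ℝ) T, E))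
    (u : C(Icc (-r) T, E)) : C(Icc (-r) T, E) :=
  ⟨fun t => η (projIcc (-r) 0 h0 t.1) +
      (∫ s in (0:ℝ)..(max 0 t.1), L₀ (seg r (ContinuousMap.IccExtend hrT u) s)) +
      ψ (projIcc 0 T h1 t.1), by
    refine Continuous.add (Continuous.add ?_ ?_) ?_
    · exact η.continuous.comp (continuous_projIcc.comp continuous_subtype_val)
    · exact (continuous_primitive
        (fun a b => (continuous_L_seg r L₀ _).intervalIntegrable a b) 0).comp
        ((continuous_const.max continuous_id).comp continuous_subtype_val)
    · exact ψ.continuous.comp (continuous_projIcc.comp continuous_subtype_val)⟩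

variable {r T : ℝ} (h0 : -r ≤ (0:ℝ)) (h1 : (0:ℝ) ≤ T) (hrT : -r ≤ T)
    (L₀ : C(Icc (-r) (0:ℝ), E) →L[ℝ] E) (η : C(Icc (-r) (0:ℝ), E)) (ψ : C(Icc (0:ℝ) T, E))

lemma Phi_apply (u : C(Icc (-r) T, E)) (t : Icc (-r) T) :
    Phi r T h0 h1 hrT L₀ η ψ u t = η (projIcc (-r) 0 h0 t.1) +
      (∫ s in (0:ℝ)..(max 0 t.1), L₀ (seg r (ContinuousMap.IccExtend hrT u) s)) +
      ψ (projIcc 0 T h1 t.1) := rfl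

include h0 in
lemma proj_max (x : ℝ) : max 0 ((projIcc (-r) T hrT x) : ℝ) = max 0 (min x T) := by
  have h : ((projIcc (-r) T hrT x) : ℝ) = max (-r) (min T x) := rfl
  rw [h, ← max_assoc, max_eq_left h0, min_comm]

lemma key (k : ℕ) : ∀ u w : C(Icc (-r) T, E), ∀ x : ℝ,
    ‖ContinuousMap.IccExtend hrT ((Phi r T h0 h1 hrT L₀ η ψ)^[k] u) x
      - ContinuousMap.IccExtend hrT ((Phi r T h0 h1 hrT L₀ η ψ)^[k] w) x‖
    ≤ ‖L₀‖ ^ k * (max 0 (min x T)) ^ k / (k.factorial) * ‖u - w‖ := by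
  induction k with
  | zero =>
    intro u w x
    simp only [iterate_zero, id_eq, pow_zero, Nat.factorial_zero, Nat.cast_one, one_mul,
      mul_one, div_one]
    have : ContinuousMap.IccExtend hrT u x - ContinuousMap.IccExtend hrT w x
        = (u - w) (projIcc (-r) T hrT x) := rfl
    rw [this]
    exact (u - w).norm_coe_le_norm _
  | succ k ih =>
    intro u w x
    set Φ := Phi r T h0 h1 hrT L₀ η ψ with hΦ
    set a := Φ^[k] u with ha
    set b := Φ^[k] w with hb
    set p := projIcc (-r) T hrT x with hp
    set m := max 0 (min x T) with hm
    have hm0 : (0:ℝ) ≤ m := le_max_left _ _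
    have hmax : max 0 (p : ℝ) = m := proj_max h0 hrT x
    set va := ContinuousMap.IccExtend hrT a with hva
    set vb := ContinuousMap.IccExtend hrT b with hvb
    have hfa : Continuous fun s => L₀ (seg r va s) := continuous_L_seg r L₀ va
    have hfb : Continuous fun s => L₀ (seg r vb s) := continuous_L_seg r L₀ vb
    have hdiff : ContinuousMap.IccExtend hrT (Φ^[k+1] u) x
        - ContinuousMap.IccExtend hrT (Φ^[k+1] w) x
        = ∫ s in (0:ℝ)..m, (L₀ (seg r va s) - L₀ (seg r vb s)) := by
      have e1 : ContinuousMap.IccExtend hrT (Φ^[k+1] u) x = Φ a p := by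
        rw [iterate_succ_apply']; rfl
      have e2 : ContinuousMap.IccExtend hrT (Φ^[k+1] w) x = Φ b p := by
        rw [iterate_succ_apply']; rfl
      rw [e1, e2, Phi_apply, Phi_apply, hmax,
        intervalIntegral.integral_sub (hfa.intervalIntegrable 0 m) (hfb.intervalIntegrable 0 m)]
      abel
    rw [hdiff]
    set D := ‖u - w‖ with hD
    have hD0 : 0 ≤ D := norm_nonneg _
    have hbound : ∀ s ∈ Icc (0:ℝ) m, ‖L₀ (seg r va s) - L₀ (seg r vb s)‖
        ≤ (‖L₀‖ ^ (k+1) / (k.factorial) * D) * s ^ k := by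
      intro s hs
      have hs0 : 0 ≤ s := hs.1
      have step1 : ‖L₀ (seg r va s) - L₀ (seg r vb s)‖
          ≤ ‖L₀‖ * ‖seg r va s - seg r vb s‖ := by
        rw [← map_sub]
        exact L₀.le_opNorm _
      have step2 : ‖seg r va s - seg r vb s‖ ≤ ‖L₀‖ ^ k * s ^ k / (k.factorial) * D := by
        apply (ContinuousMap.norm_le _ (by positivity)).2
        intro θ
        have hθ : ((seg r va s - seg r vb s) θ) = va (s + θ.1) - vb (s + θ.1) := rfl
        rw [hθ]
        refine le_trans (ih u w (s + θ.1)) ?_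
        have hmono : max 0 (min (s + θ.1) T) ≤ s :=
          max_le hs0 (le_trans (min_le_left _ _) (by linarith [θ.2.2]))
        gcongr
      calc ‖L₀ (seg r va s) - L₀ (seg r vb s)‖
          ≤ ‖L₀‖ * (‖L₀‖ ^ k * s ^ k / (k.factorial) * D) := by
            refine step1.trans ?_
            exact mul_le_mul_of_nonneg_left step2 (norm_nonneg L₀)
        _ = (‖L₀‖ ^ (k+1) / (k.factorial) * D) * s ^ k := by ring
    have hcont : Continuous fun s => ‖L₀ (seg r va s) - L₀ (seg r vb s)‖ :=
      (hfa.sub hfb).norm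
    calc ‖∫ s in (0:ℝ)..m, (L₀ (seg r va s) - L₀ (seg r vb s))‖
        ≤ ∫ s in (0:ℝ)..m, ‖L₀ (seg r va s) - L₀ (seg r vb s)‖ :=
          intervalIntegral.norm_integral_le_integral_norm hm0
      _ ≤ ∫ s in (0:ℝ)..m, (‖L₀‖ ^ (k+1) / (k.factorial) * D) * s ^ k := by
          refine intervalIntegral.integral_mono_on hm0 (hcont.intervalIntegrable 0 m)
            ((continuous_const.mul (continuous_pow k)).intervalIntegrable 0 m) hbound
      _ = (‖L₀‖ ^ (k+1) / (k.factorial) * D) * (m ^ (k+1) / (k+1)) := by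
          rw [intervalIntegral.integral_const_mul, integral_pow]
          ring_nf
      _ = ‖L₀‖ ^ (k+1) * m ^ (k+1) / ((k+1).factorial) * D := by
          rw [Nat.factorial_succ]
          have hk : (k.factorial : ℝ) ≠ 0 := by positivity
          push_cast
          field_simp


set_option linter.unusedSectionVars false in
include h1 in
lemma lip (k : ℕ) (u w : C(Icc (-r) T, E)) :
    dist ((Phi r T h0 h1 hrT L₀ η ψ)^[k] u) ((Phi r T h0 h1 hrT L₀ η ψ)^[k] w)
      ≤ (‖L₀‖ ^ k * T ^ k / k.factorial) * dist u w := by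
  rw [dist_eq_norm, dist_eq_norm]
  have hc0 : (0:ℝ) ≤ ‖L₀‖ ^ k * T ^ k / k.factorial :=
    div_nonneg (mul_nonneg (pow_nonneg (norm_nonneg L₀) _) (pow_nonneg h1 _))
      (Nat.cast_nonneg _)
  refine (ContinuousMap.norm_le _ (mul_nonneg hc0 (norm_nonneg _))).2 ?_
  intro t
  have e : ((Phi r T h0 h1 hrT L₀ η ψ)^[k] u - (Phi r T h0 h1 hrT L₀ η ψ)^[k] w) t
      = ContinuousMap.IccExtend hrT ((Phi r T h0 h1 hrT L₀ η ψ)^[k] u) t.1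
        - ContinuousMap.IccExtend hrT ((Phi r T h0 h1 hrT L₀ η ψ)^[k] w) t.1 := by
    rw [ContinuousMap.sub_apply]
    congr 1 <;> exact (Set.IccExtend_of_mem hrT _ t.2).symm
  rw [e]
  refine (key h0 h1 hrT L₀ η ψ k u w t.1).trans ?_
  have hmT : max 0 (min t.1 T) ≤ T := max_le h1 (min_le_right _ _)
  gcongr

end Aux

/-- `v` solves the linear delay integral equation with initial segment `η` and forcing `ψ`. -/
def IsSolDDE (n : ℕ) (r T : ℝ) (hr : 0 < r) (hT : 0 < T)
    (L₀ : C(Set.Icc (-r) (0 : ℝ), EuclideanSpace ℝ (Fin n)) →L[ℝ] EuclideanSpace ℝ (Fin n))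
    (η : C(Set.Icc (-r) (0 : ℝ), EuclideanSpace ℝ (Fin n)))
    (ψ : C(Set.Icc (0 : ℝ) T, EuclideanSpace ℝ (Fin n)))
    (v : C(ℝ, EuclideanSpace ℝ (Fin n))) : Prop :=
  (∀ θ : Set.Icc (-r) (0 : ℝ), v θ.1 = η θ) ∧
  (∀ t : ℝ, ∀ ht : t ∈ Set.Icc (0 : ℝ) T,
    v t = η ⟨0, ⟨by linarith, le_rfl⟩⟩ + (∫ s in (0 : ℝ)..t, L₀ (seg r v s)) + ψ ⟨t, ht⟩)

/-- existence and uniqueness of the solution of the linear delay integral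
equation `v(t) = η(0) + ∫₀ᵗ L₀(Π_s v) ds + ψ(t)` with initial segment `η` on `[-r,0]`
(the solution map `𝔅_η` of the paper). Uniqueness holds on `[-r, T]`. -/
theorem stmt_3 (n : ℕ) (hn : 0 < n) (r T : ℝ) (hr : 0 < r) (hT : 0 < T)
    (L₀ : C(Set.Icc (-r) (0 : ℝ), EuclideanSpace ℝ (Fin n)) →L[ℝ] EuclideanSpace ℝ (Fin n))
    (η : C(Set.Icc (-r) (0 : ℝ), EuclideanSpace ℝ (Fin n)))
    (ψ : C(Set.Icc (0 : ℝ) T, EuclideanSpace ℝ (Fin n)))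
    (hψ0 : ψ ⟨0, ⟨le_rfl, hT.le⟩⟩ = 0) :
    ∃ v : C(ℝ, EuclideanSpace ℝ (Fin n)),
      IsSolDDE n r T hr hT L₀ η ψ v ∧
      ∀ w : C(ℝ, EuclideanSpace ℝ (Fin n)),
        IsSolDDE n r T hr hT L₀ η ψ w → ∀ t ∈ Set.Icc (-r) T, w t = v t := by
  have h0 : -r ≤ (0:ℝ) := by linarith
  have h1 : (0:ℝ) ≤ T := hT.le
  have hrT : -r ≤ T := by linarith
  set E := EuclideanSpace ℝ (Fin n)
  set Φ : C(Icc (-r) T, E) → C(Icc (-r) T, E) := Phi r T h0 h1 hrT L₀ η ψ with hΦdef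
  -- choose the number of iterations
  obtain ⟨k, hk⟩ := ((FloorSemiring.tendsto_pow_div_factorial_atTop (‖L₀‖ * T)).eventually
    (gt_mem_nhds (by norm_num : (0:ℝ) < 1))).exists
  have hc0 : (0:ℝ) ≤ ‖L₀‖ ^ k * T ^ k / k.factorial :=
    div_nonneg (mul_nonneg (pow_nonneg (norm_nonneg L₀) _) (pow_nonneg h1 _))
      (Nat.cast_nonneg _)
  have hc1 : ‖L₀‖ ^ k * T ^ k / k.factorial < 1 := by
    rw [← mul_pow]; exact hk
  set K : NNReal := ⟨‖L₀‖ ^ k * T ^ k / k.factorial, hc0⟩ with hKdef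
  have hK : ContractingWith K (Φ^[k]) := by
    constructor
    · rwa [← NNReal.coe_lt_one]
    · exact LipschitzWith.of_dist_le_mul (fun u w => lip h0 h1 hrT L₀ η ψ k u w)
  set x₀ : C(Icc (-r) T, E) := ContractingWith.fixedPoint (Φ^[k]) hK with hx₀
  have hfix : Φ x₀ = x₀ := ContractingWith.isFixedPt_fixedPoint_iterate (f := Φ) (n := k) hK
  refine ⟨ContinuousMap.IccExtend hrT x₀, ⟨?_, ?_⟩, ?_⟩
  · -- initial segment
    intro θ
    have hθT : θ.1 ∈ Icc (-r) T := ⟨θ.2.1, θ.2.2.trans h1⟩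
    have e1 : (ContinuousMap.IccExtend hrT x₀ : C(ℝ, E)) θ.1 = x₀ ⟨θ.1, hθT⟩ :=
      Set.IccExtend_of_mem hrT _ hθT
    rw [e1, ← hfix, Phi_apply, projIcc_of_mem h0 θ.2,
      max_eq_left θ.2.2, intervalIntegral.integral_same, projIcc_of_le_left h1 θ.2.2]
    have : ψ ⟨0, left_mem_Icc.2 h1⟩ = 0 := hψ0
    rw [this]
    simp
  · -- integral equation
    intro t ht
    have htT : t ∈ Icc (-r) T := ⟨le_trans h0 ht.1, ht.2⟩
    have e1 : (ContinuousMap.IccExtend hrT x₀ : C(ℝ, E)) t = x₀ ⟨t, htT⟩ :=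
      Set.IccExtend_of_mem hrT _ htT
    rw [e1]
    conv_lhs => rw [← hfix]
    rw [Phi_apply, projIcc_of_right_le h0 ht.1,
      max_eq_right ht.1, projIcc_of_mem h1 ht]
  · -- uniqueness
    rintro w ⟨hw1, hw2⟩ t ht
    set w' : C(Icc (-r) T, E) := w.restrict (Icc (-r) T) with hw'
    have hfw : Φ w' = w' := by
      refine ContinuousMap.ext fun s => ?_
      rw [show Φ w' s = _ from Phi_apply h0 h1 hrT L₀ η ψ w' s]
      rcases le_total s.1 0 with hs | hs
      · have hs0 : s.1 ∈ Icc (-r) (0:ℝ) := ⟨s.2.1, hs⟩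
        rw [projIcc_of_mem h0 hs0, max_eq_left hs, intervalIntegral.integral_same,
          projIcc_of_le_left h1 hs]
        have hz : ψ ⟨0, left_mem_Icc.2 h1⟩ = 0 := hψ0
        rw [hz]
        have := hw1 ⟨s.1, hs0⟩
        simp only [ContinuousMap.restrict_apply, hw']
        rw [← this]
        simp
      · have hsT : s.1 ∈ Icc (0:ℝ) T := ⟨hs, s.2.2⟩
        rw [projIcc_of_right_le h0 hs, max_eq_right hs, projIcc_of_mem h1 hsT]
        have hint : (∫ u in (0:ℝ)..s.1, L₀ (seg r (ContinuousMap.IccExtend hrT w') u))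
            = ∫ u in (0:ℝ)..s.1, L₀ (seg r w u) := by
          refine intervalIntegral.integral_congr ?_
          intro u hu
          rw [uIcc_of_le hs] at hu
          show L₀ (seg r (ContinuousMap.IccExtend hrT w') u) = L₀ (seg r w u)
          congr 1
          refine ContinuousMap.ext fun θ => ?_
          have hmem : u + θ.1 ∈ Icc (-r) T :=
            ⟨le_trans θ.2.1 (by linarith [hu.1]), by linarith [θ.2.2, hu.2, s.2.2]⟩
          show Set.IccExtend hrT ⇑w' (u + θ.1) = w (u + θ.1)
          rw [Set.IccExtend_of_mem hrT _ hmem]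
          rfl
        rw [hint]
        have := hw2 s.1 hsT
        simp only [ContinuousMap.restrict_apply, hw']
        rw [this]
    have hw'x : w' = x₀ := hK.fixedPoint_unique ((Function.IsFixedPt.iterate hfw k))
    have e1 : (ContinuousMap.IccExtend hrT x₀ : C(ℝ, E)) t = x₀ ⟨t, ht⟩ :=
      Set.IccExtend_of_mem hrT _ ht
    rw [e1, ← hw'x]
    simp [hw']
end

section
/- Let r, T > 0, let n be a positive integer, let L₀ : C([−r, 0]; ℝⁿ) → ℝⁿ be a continuous linear map with operator norm ‖L₀‖, and let η ∈ C([−r, 0]; ℝⁿ). For i = 1, 2 let ψᵢ : [0, T] → ℝⁿ be continuous with ψᵢ(0) = 0, and let vᵢ : [−r, T] → ℝⁿ be continuous with vᵢ(θ) = η(θ) for θ ∈ [−r, 0] and vᵢ(t) = η(0) + ∫₀ᵗ L₀(Π_s vᵢ) ds + ψᵢ(t) for t ∈ [0, T]. Then sup_{t ∈ [−r, T]} ‖v₁(t) − v₂(t)‖ ≤ e^{‖L₀‖ T} · sup_{t ∈ [0, T]} ‖ψ₁(t) − ψ₂(t)‖. -/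
/-- `s ↦ seg r v s` is continuous into `C([-r,0]; E)` with the sup topology. -/
lemma seg_continuous {E : Type*} [TopologicalSpace E] (r : ℝ) (v : C(ℝ, E)) :
    Continuous (seg r v) := by
  have : seg r v = fun s =>
      (ContinuousMap.curry (v.comp
        ⟨fun p : ℝ × Set.Icc (-r) (0 : ℝ) => p.1 + p.2.1, by continuity⟩)) s := by
    funext s; ext θ; rfl
  rw [this]
  exact (ContinuousMap.curry _).continuous

/-- the solution map of the linear delay integral equation is Lipschitz
(with constant `e^{‖L₀‖ T}`) from the space of continuous forcing paths with sup norm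
to the space of continuous solutions with sup norm. -/
theorem stmt_4 (n : ℕ) (hn : 0 < n) (r T : ℝ) (hr : 0 < r) (hT : 0 < T)
    (L₀ : C(Set.Icc (-r) (0 : ℝ), EuclideanSpace ℝ (Fin n)) →L[ℝ] EuclideanSpace ℝ (Fin n))
    (η : C(Set.Icc (-r) (0 : ℝ), EuclideanSpace ℝ (Fin n)))
    (ψ₁ ψ₂ : C(Set.Icc (0 : ℝ) T, EuclideanSpace ℝ (Fin n)))
    (hψ₁0 : ψ₁ ⟨0, ⟨le_rfl, hT.le⟩⟩ = 0) (hψ₂0 : ψ₂ ⟨0, ⟨le_rfl, hT.le⟩⟩ = 0)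
    (v₁ v₂ : C(ℝ, EuclideanSpace ℝ (Fin n)))
    (hv₁η : ∀ θ : Set.Icc (-r) (0 : ℝ), v₁ θ.1 = η θ)
    (hv₂η : ∀ θ : Set.Icc (-r) (0 : ℝ), v₂ θ.1 = η θ)
    (hv₁ : ∀ t : ℝ, ∀ ht : t ∈ Set.Icc (0 : ℝ) T,
      v₁ t = η ⟨0, ⟨by linarith, le_rfl⟩⟩ + (∫ s in (0 : ℝ)..t, L₀ (seg r v₁ s)) + ψ₁ ⟨t, ht⟩)
    (hv₂ : ∀ t : ℝ, ∀ ht : t ∈ Set.Icc (0 : ℝ) T,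
      v₂ t = η ⟨0, ⟨by linarith, le_rfl⟩⟩ + (∫ s in (0 : ℝ)..t, L₀ (seg r v₂ s)) + ψ₂ ⟨t, ht⟩) :
    ∀ t ∈ Set.Icc (-r) T,
      ‖v₁ t - v₂ t‖ ≤ Real.exp (‖L₀‖ * T) * ⨆ s : Set.Icc (0 : ℝ) T, ‖ψ₁ s - ψ₂ s‖ := by
  set K := ‖L₀‖ with hKdef
  have hK0 : 0 ≤ K := hKdef ▸ norm_nonneg L₀
  set Ψ := ⨆ s : Set.Icc (0 : ℝ) T, ‖ψ₁ s - ψ₂ s‖ with hΨdef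
  -- boundedness and basic properties of Ψ
  have hbdd : BddAbove (Set.range fun s : Set.Icc (0 : ℝ) T => ‖ψ₁ s - ψ₂ s‖) :=
    (isCompact_range ((ψ₁.continuous.sub ψ₂.continuous).norm)).bddAbove
  have hΨle : ∀ s : Set.Icc (0 : ℝ) T, ‖ψ₁ s - ψ₂ s‖ ≤ Ψ := fun s => le_ciSup hbdd s
  have hΨ0 : 0 ≤ Ψ := le_trans (norm_nonneg _) (hΨle ⟨0, ⟨le_rfl, hT.le⟩⟩)
  -- the difference of integrands
  set G : ℝ → EuclideanSpace ℝ (Fin n) :=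
    fun s => L₀ (seg r v₁ s) - L₀ (seg r v₂ s) with hGdef
  have hGcont : Continuous G :=
    (L₀.continuous.comp (seg_continuous r v₁)).sub
      (L₀.continuous.comp (seg_continuous r v₂))
  set φ : ℝ → ℝ := fun t => ∫ s in (0 : ℝ)..t, ‖G s‖ with hφdef
  have hnormcont : Continuous fun s => ‖G s‖ := hGcont.norm
  have hφderiv : ∀ x : ℝ, HasDerivAt φ ‖G x‖ x := fun x =>
    intervalIntegral.integral_hasDerivAt_right (hnormcont.intervalIntegrable 0 x)
      (hnormcont.stronglyMeasurableAtFilter _ _) hnormcont.continuousAt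
  have hφcont : Continuous φ :=
    continuous_iff_continuousAt.2 fun x => (hφderiv x).continuousAt
  have hφ0 : φ 0 = 0 := intervalIntegral.integral_same
  have hφnonneg : ∀ t : ℝ, 0 ≤ t → 0 ≤ φ t := fun t ht =>
    intervalIntegral.integral_nonneg ht fun s _ => norm_nonneg _
  have hφmono : ∀ a b : ℝ, 0 ≤ a → a ≤ b → φ a ≤ φ b := fun a b ha hab =>
    intervalIntegral.integral_mono_interval le_rfl ha hab
      (Filter.Eventually.of_forall fun s => norm_nonneg _)
      (hnormcont.intervalIntegrable 0 b)
  -- the fundamental pointwise estimate from the integral equation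
  have hwkey : ∀ τ : ℝ, ∀ hτ : τ ∈ Set.Icc (0 : ℝ) T, ‖v₁ τ - v₂ τ‖ ≤ φ τ + Ψ := by
    intro τ hτ
    have hInt : v₁ τ - v₂ τ = (∫ s in (0 : ℝ)..τ, G s) + (ψ₁ ⟨τ, hτ⟩ - ψ₂ ⟨τ, hτ⟩) := by
      have hi₁ : IntervalIntegrable (fun s => L₀ (seg r v₁ s)) MeasureTheory.volume 0 τ :=
        (L₀.continuous.comp (seg_continuous r v₁)).intervalIntegrable 0 τ
      have hi₂ : IntervalIntegrable (fun s => L₀ (seg r v₂ s)) MeasureTheory.volume 0 τ :=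
        (L₀.continuous.comp (seg_continuous r v₂)).intervalIntegrable 0 τ
      have hsub : (∫ s in (0 : ℝ)..τ, G s) =
          (∫ s in (0 : ℝ)..τ, L₀ (seg r v₁ s)) - ∫ s in (0 : ℝ)..τ, L₀ (seg r v₂ s) :=
        intervalIntegral.integral_sub hi₁ hi₂
      rw [hv₁ τ hτ, hv₂ τ hτ, hsub]
      abel
    rw [hInt]
    calc ‖(∫ s in (0 : ℝ)..τ, G s) + (ψ₁ ⟨τ, hτ⟩ - ψ₂ ⟨τ, hτ⟩)‖
        ≤ ‖∫ s in (0 : ℝ)..τ, G s‖ + ‖ψ₁ ⟨τ, hτ⟩ - ψ₂ ⟨τ, hτ⟩‖ := norm_add_le _ _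
      _ ≤ φ τ + Ψ := add_le_add
          (intervalIntegral.norm_integral_le_integral_norm hτ.1) (hΨle ⟨τ, hτ⟩)
  -- vanishing of the difference on [-r, 0]
  have hwzero : ∀ τ : ℝ, -r ≤ τ → τ ≤ 0 → v₁ τ - v₂ τ = 0 := by
    intro τ h1 h2
    rw [hv₁η ⟨τ, ⟨h1, h2⟩⟩, hv₂η ⟨τ, ⟨h1, h2⟩⟩, sub_self]
  -- Gronwall
  have hgron : ∀ x ∈ Set.Icc (0 : ℝ) T, ‖φ x‖ ≤ gronwallBound 0 K (K * Ψ) (x - 0) := by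
    apply norm_le_gronwallBound_of_norm_deriv_right_le (f' := fun x => ‖G x‖)
      hφcont.continuousOn (fun x _ => (hφderiv x).hasDerivWithinAt)
    · simp [hφ0]
    · intro x hx
      have hφx : 0 ≤ φ x := hφnonneg x hx.1
      have hseg : ‖seg r v₁ x - seg r v₂ x‖ ≤ φ x + Ψ := by
        refine (ContinuousMap.norm_le _ (by positivity)).2 fun θ => ?_
        have hval : (seg r v₁ x - seg r v₂ x) θ = v₁ (x + θ.1) - v₂ (x + θ.1) := rfl
        rw [hval]
        rcases le_or_gt (x + θ.1) 0 with hle | hlt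
        · rw [hwzero (x + θ.1) (by have := θ.2.1; linarith [hx.1]) hle, norm_zero]
          positivity
        · have hmem : x + θ.1 ∈ Set.Icc (0 : ℝ) T :=
            ⟨hlt.le, by have := θ.2.2; linarith [hx.2.le]⟩
          calc ‖v₁ (x + θ.1) - v₂ (x + θ.1)‖ ≤ φ (x + θ.1) + Ψ := hwkey _ hmem
            _ ≤ φ x + Ψ := by
                have := hφmono (x + θ.1) x hlt.le (by have := θ.2.2; linarith)
                linarith
      have hGbound : ‖G x‖ ≤ K * (φ x + Ψ) := by
        have : G x = L₀ (seg r v₁ x - seg r v₂ x) := by simp [hGdef, map_sub]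
        rw [this]
        exact (L₀.le_opNorm _).trans (by nlinarith [L₀.opNorm_nonneg])
      rw [Real.norm_eq_abs, abs_of_nonneg (norm_nonneg _), Real.norm_eq_abs,
        abs_of_nonneg hφx]
      nlinarith
  -- conclusion
  intro t ht
  rcases le_or_gt t 0 with hle | hlt
  · rw [hwzero t ht.1 hle, norm_zero]
    positivity
  · have htmem : t ∈ Set.Icc (0 : ℝ) T := ⟨hlt.le, ht.2⟩
    have h1 : ‖v₁ t - v₂ t‖ ≤ φ t + Ψ := hwkey t htmem
    have h2 : φ t ≤ gronwallBound 0 K (K * Ψ) t := by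
      have := hgron t htmem
      rwa [sub_zero, Real.norm_eq_abs, abs_of_nonneg (hφnonneg t hlt.le)] at this
    have h3 : gronwallBound 0 K (K * Ψ) t + Ψ ≤ Real.exp (K * T) * Ψ := by
      rcases eq_or_ne K 0 with hK | hK
      · simp [hK, gronwallBound_K0]
      · rw [gronwallBound_of_K_ne_0 hK]
        have hdiv : K * Ψ / K = Ψ := by field_simp
        rw [hdiv]
        have hexp : Real.exp (K * t) ≤ Real.exp (K * T) :=
          Real.exp_le_exp.2 (by nlinarith [htmem.2])
        have hmul := mul_le_mul_of_nonneg_left hexp hΨ0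
        show 0 * Real.exp (K * t) + Ψ * (Real.exp (K * t) - 1) + Ψ ≤ Real.exp (K * T) * Ψ
        nlinarith [Real.exp_pos (K * t)]
    linarith
end

section
/- Let r, T > 0, let n be a positive integer, let L₀ : C([−r, 0]; ℝⁿ) → ℝⁿ be a continuous linear map, and let η ∈ C([−r, 0]; ℝⁿ). Let X = { ψ ∈ C([0, T]; ℝⁿ) : ψ(0) = 0 } and Y = { v ∈ C([−r, T]; ℝⁿ) : v(θ) = η(θ) for all θ ∈ [−r, 0] }. Define 𝔅_η : X → Y by sending ψ to the unique v ∈ Y satisfying v(t) = η(0) + ∫₀ᵗ L₀(Π_s v) ds + ψ(t) for t ∈ [0, T]. Then 𝔅_η is a bijection from X onto Y, and its inverse is given by (𝔅_η⁻¹ v)(t) = v(t) − η(0) − ∫₀ᵗ L₀(Π_s v) ds for t ∈ [0, T]. -/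
/-!
Writing `R v t = v t - η 0 - ∫₀ᵗ L₀ (Π_s v) ds`, the defining equation of `𝔅_η` says exactly
`R (𝔅_η ψ) = ψ`, which gives the inverse formula and injectivity at once. For surjectivity, a
path `v ∈ Y` has `R v ∈ X`, and `w = 𝔅_η (R v) - v` vanishes on `[-r, 0]` and solves
`w t = ∫₀ᵗ L₀ (Π_s w) ds`. Iterating this equation gives `‖w t‖ ≤ ‖w‖ (‖L₀‖ t)ᵏ / k!` for every
`k`, so `w = 0`.
-/

/-- The segment extractor for functions defined on `[-r, T]`: for `v : C([-r,T], E)`,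
`s ∈ [0, T]` and `θ ∈ [-r, 0]`, `(segI r T h v s) θ = v (s + θ)` (points outside
`[-r, T]` are clamped via `Set.projIcc`; when `s ∈ [0,T]` one has `s + θ ∈ [-r,T]`,
so no clamping actually occurs there). -/
noncomputable def segI {E : Type*} [TopologicalSpace E] (r T : ℝ) (h : -r ≤ T)
    (v : C(Set.Icc (-r) T, E)) (s : ℝ) : C(Set.Icc (-r) (0 : ℝ), E) :=
  v.comp ⟨fun θ => Set.projIcc (-r) T h (s + θ.1),
    (continuous_projIcc.comp (continuous_const.add continuous_subtype_val))⟩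

open Set

section Segment

variable {E : Type*} {r T : ℝ} (h : -r ≤ T)

lemma segI_apply [TopologicalSpace E] (v : C(Icc (-r) T, E)) (s : ℝ) (θ : Icc (-r) (0 : ℝ)) :
    segI r T h v s θ = v (projIcc (-r) T h (s + θ.1)) :=
  rfl

lemma segI_sub [TopologicalSpace E] [AddGroup E] [IsTopologicalAddGroup E]
    (u v : C(Icc (-r) T, E)) (s : ℝ) :
    segI r T h (u - v) s = segI r T h u s - segI r T h v s :=
  rfl

lemma continuous_segI [TopologicalSpace E] (v : C(Icc (-r) T, E)) :
    Continuous (segI r T h v) :=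
  (ContinuousMap.curry <| v.comp
    ⟨fun p : ℝ × Icc (-r) (0 : ℝ) => projIcc (-r) T h (p.1 + p.2.1),
      continuous_projIcc.comp (continuous_fst.add (continuous_subtype_val.comp continuous_snd))⟩
    ).continuous

lemma norm_segI_le [NormedAddCommGroup E] {w : C(Icc (-r) T, E)} {φ : ℝ → ℝ}
    (hφ : MonotoneOn φ (Ici 0)) (h0 : ∀ x : Icc (-r) T, x.1 ≤ 0 → w x = 0)
    (hw : ∀ x : Icc (-r) T, 0 ≤ x.1 → ‖w x‖ ≤ φ x.1) {s : ℝ} (hs : s ∈ Icc 0 T)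
    (hφs : 0 ≤ φ s) : ‖segI r T h w s‖ ≤ φ s := by
  refine (ContinuousMap.norm_le _ hφs).2 fun θ => ?_
  have hmem : s + θ.1 ∈ Icc (-r) T := ⟨by linarith [θ.2.1, hs.1], by linarith [θ.2.2, hs.2]⟩
  rw [segI_apply, projIcc_of_mem h hmem]
  rcases le_or_gt (s + θ.1) 0 with hle | hpos
  · rwa [h0 _ hle, norm_zero]
  · exact (hw _ hpos.le).trans (hφ hpos.le hs.1 (by linarith [θ.2.2]))

end Segment

lemma integral_mul_pow_div_factorial (c x : ℝ) (k : ℕ) :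
    ∫ s in (0 : ℝ)..x, c * ((c * s) ^ k / k.factorial) =
      (c * x) ^ (k + 1) / (k + 1).factorial := by
  simp_rw [mul_pow, mul_div_assoc, ← mul_assoc, ← pow_succ', div_eq_mul_inv,
    intervalIntegral.integral_const_mul, intervalIntegral.integral_mul_const, integral_pow,
    Nat.factorial_succ]
  push_cast
  field_simp
  ring

section Uniqueness

variable {E : Type*} [NormedAddCommGroup E] [NormedSpace ℝ E] {r T : ℝ} (h : -r ≤ T)
  (L₀ : C(Icc (-r) (0 : ℝ), E) →L[ℝ] E) {w : C(Icc (-r) T, E)}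

lemma norm_apply_le_pow_div_factorial (h0 : ∀ x : Icc (-r) T, x.1 ≤ 0 → w x = 0)
    (heq : ∀ x : Icc (-r) T, 0 ≤ x.1 → w x = ∫ s in (0 : ℝ)..x.1, L₀ (segI r T h w s))
    (k : ℕ) (x : Icc (-r) T) (hx : 0 ≤ x.1) :
    ‖w x‖ ≤ ‖w‖ * ((‖L₀‖ * x.1) ^ k / k.factorial) := by
  induction k generalizing x with
  | zero => simpa using w.norm_coe_le_norm x
  | succ k ih =>
    have hmono : MonotoneOn (fun s => ‖w‖ * ((‖L₀‖ * s) ^ k / k.factorial)) (Ici 0) :=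
      fun a (ha : 0 ≤ a) b _ hab => by dsimp only; gcongr
    have hseg : ∀ s ∈ Icc 0 x.1, ‖segI r T h w s‖ ≤ ‖w‖ * ((‖L₀‖ * s) ^ k / k.factorial) :=
      fun s hs => norm_segI_le h hmono h0 ih ⟨hs.1, hs.2.trans x.2.2⟩ (by have := hs.1; positivity)
    calc ‖w x‖ = ‖∫ s in (0 : ℝ)..x.1, L₀ (segI r T h w s)‖ := by rw [heq x hx]
      _ ≤ ∫ s in (0 : ℝ)..x.1, ‖L₀‖ * (‖w‖ * ((‖L₀‖ * s) ^ k / k.factorial)) := by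
        refine intervalIntegral.norm_integral_le_of_norm_le hx
          (Filter.Eventually.of_forall fun s hs => ?_)
          (Continuous.intervalIntegrable (by fun_prop) _ _)
        exact (L₀.le_opNorm _).trans (by gcongr; exact hseg s (Ioc_subset_Icc_self hs))
      _ = ‖w‖ * ((‖L₀‖ * x.1) ^ (k + 1) / (k + 1).factorial) := by
        simp_rw [mul_left_comm ‖L₀‖ ‖w‖]
        rw [intervalIntegral.integral_const_mul, integral_mul_pow_div_factorial]

lemma eq_zero_of_eq_integral_segI (h0 : ∀ x : Icc (-r) T, x.1 ≤ 0 → w x = 0)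
    (heq : ∀ x : Icc (-r) T, 0 ≤ x.1 → w x = ∫ s in (0 : ℝ)..x.1, L₀ (segI r T h w s)) :
    w = 0 := by
  ext x
  rcases le_or_gt x.1 0 with hle | hpos
  · exact h0 x hle
  · have hlim := (FloorSemiring.tendsto_pow_div_factorial_atTop (‖L₀‖ * x.1)).const_mul ‖w‖
    rw [mul_zero] at hlim
    exact norm_le_zero_iff.1
      (ge_of_tendsto' hlim fun k => norm_apply_le_pow_div_factorial h L₀ h0 heq k x hpos.le)

end Uniqueness

section Residual

variable {E : Type*} [NormedAddCommGroup E] [NormedSpace ℝ E] {r T : ℝ} (hr : 0 ≤ r) (hT : 0 ≤ T)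
  (L₀ : C(Icc (-r) (0 : ℝ), E) →L[ℝ] E)

/-- For `x₀ = η 0` this is the paper's `𝔅_η⁻¹`. -/
noncomputable def delayResidual (x₀ : E) (v : C(Icc (-r) T, E)) : C(Icc (0 : ℝ) T, E) where
  toFun t := v ⟨t.1, ⟨by linarith [t.2.1], t.2.2⟩⟩ - x₀ -
    ∫ s in (0 : ℝ)..t.1, L₀ (segI r T (by linarith) v s)
  continuous_toFun := by
    have hL : Continuous fun s => L₀ (segI r T (by linarith) v s) :=
      L₀.continuous.comp (continuous_segI _ v)
    exact ((v.continuous.comp (continuous_subtype_val.subtype_mk _)).sub continuous_const).sub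
      ((intervalIntegral.continuous_primitive (fun a b => hL.intervalIntegrable a b) 0).comp
        continuous_subtype_val)

lemma delayResidual_apply (x₀ : E) (v : C(Icc (-r) T, E)) (t : Icc (0 : ℝ) T) :
    delayResidual hr hT L₀ x₀ v t = v ⟨t.1, ⟨by linarith [t.2.1], t.2.2⟩⟩ - x₀ -
      ∫ s in (0 : ℝ)..t.1, L₀ (segI r T (by linarith) v s) :=
  rfl

lemma delayResidual_sub (x₀ : E) (u v : C(Icc (-r) T, E)) :
    delayResidual hr hT L₀ x₀ u - delayResidual hr hT L₀ x₀ v =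
      delayResidual hr hT L₀ 0 (u - v) := by
  have hL : ∀ v : C(Icc (-r) T, E), Continuous fun s => L₀ (segI r T (by linarith) v s) :=
    fun v => L₀.continuous.comp (continuous_segI _ v)
  ext t
  simp only [ContinuousMap.sub_apply, delayResidual_apply, segI_sub, map_sub,
    intervalIntegral.integral_sub ((hL u).intervalIntegrable _ _) ((hL v).intervalIntegrable _ _)]
  abel

lemma eq_of_delayResidual_eq {x₀ : E} {u v : C(Icc (-r) T, E)}
    (hinit : ∀ x : Icc (-r) T, x.1 ≤ 0 → u x = v x)
    (heq : delayResidual hr hT L₀ x₀ u = delayResidual hr hT L₀ x₀ v) : u = v := by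
  have hres := congrArg (fun f => f - delayResidual hr hT L₀ x₀ v) heq
  simp only [sub_self, delayResidual_sub] at hres
  refine sub_eq_zero.1 (eq_zero_of_eq_integral_segI (by linarith) L₀
    (fun x hx => sub_eq_zero.2 (hinit x hx)) fun x hx => ?_)
  simpa [delayResidual_apply, sub_eq_zero] using congrArg (· ⟨x.1, hx, x.2.2⟩) hres

end Residual

/-- the solution map `𝔅_η`, sending a forcing path `ψ ∈ X = {ψ ∈ C([0,T];ℝⁿ) :
ψ(0) = 0}` to the solution `v ∈ Y = {v ∈ C([-r,T];ℝⁿ) : v = η on [-r,0]}` of the linear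
delay integral equation, is a bijection from `X` onto `Y`, and its inverse is
`(𝔅_η⁻¹ v)(t) = v(t) - η(0) - ∫₀ᵗ L₀(Π_s v) ds`. -/
theorem stmt_5 (n : ℕ) (r T : ℝ) (hr : 0 < r) (hT : 0 < T)
    (L₀ : C(Set.Icc (-r) (0 : ℝ), EuclideanSpace ℝ (Fin n)) →L[ℝ] EuclideanSpace ℝ (Fin n))
    (η : C(Set.Icc (-r) (0 : ℝ), EuclideanSpace ℝ (Fin n)))
    (B : {ψ : C(Set.Icc (0 : ℝ) T, EuclideanSpace ℝ (Fin n)) // ψ ⟨0, ⟨le_rfl, hT.le⟩⟩ = 0} →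
         {v : C(Set.Icc (-r) T, EuclideanSpace ℝ (Fin n)) //
           ∀ θ : Set.Icc (-r) (0 : ℝ), v ⟨θ.1, ⟨θ.2.1, θ.2.2.trans hT.le⟩⟩ = η θ})
    (hB : ∀ ψ, ∀ t : ℝ, ∀ ht : t ∈ Set.Icc (0 : ℝ) T,
      (B ψ).1 ⟨t, ⟨le_trans (by linarith : -r ≤ 0) ht.1, ht.2⟩⟩ =
        η ⟨0, ⟨by linarith, le_rfl⟩⟩ +
        (∫ s in (0 : ℝ)..t, L₀ (segI r T (by linarith) (B ψ).1 s)) + ψ.1 ⟨t, ht⟩) :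
    Function.Bijective B ∧
    ∀ ψ, ∀ v, B ψ = v → ∀ t : ℝ, ∀ ht : t ∈ Set.Icc (0 : ℝ) T,
      ψ.1 ⟨t, ht⟩ =
        v.1 ⟨t, ⟨le_trans (by linarith : -r ≤ 0) ht.1, ht.2⟩⟩ - η ⟨0, ⟨by linarith, le_rfl⟩⟩ -
        ∫ s in (0 : ℝ)..t, L₀ (segI r T (by linarith) v.1 s) := by
  set R := delayResidual hr.le hT.le L₀ (η ⟨0, ⟨by linarith, le_rfl⟩⟩)
  have hRB : ∀ ψ, R (B ψ).1 = ψ.1 := fun ψ => by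
    ext t
    rw [delayResidual_apply, hB ψ t.1 t.2, add_assoc, add_sub_cancel_left, add_sub_cancel_left]
  refine ⟨⟨fun ψ₁ ψ₂ hψ => Subtype.ext ?_, fun v => ?_⟩, fun ψ v hv t ht => ?_⟩
  · rw [← hRB ψ₁, ← hRB ψ₂, hψ]
  · have hRv : R v.1 ⟨0, ⟨le_rfl, hT.le⟩⟩ = 0 := by
      rw [delayResidual_apply, intervalIntegral.integral_same, sub_zero, sub_eq_zero]
      exact v.2 ⟨0, ⟨by linarith, le_rfl⟩⟩
    refine ⟨⟨R v.1, hRv⟩, Subtype.ext (eq_of_delayResidual_eq hr.le hT.le L₀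
      (fun x hx => ((B _).2 ⟨x.1, x.2.1, hx⟩).trans (v.2 ⟨x.1, x.2.1, hx⟩).symm) (hRB _))⟩
  · rw [← hRB ψ, hv]
    rfl
end

section
/- Let t > 0, g > 0, let f : [0, t] → ℝ be continuous, and let ρ ∈ ℝ. Define u* : [0, t] → ℝ by u*(s) = −ρ f(t − s) / √(1 + ρ² f(t − s)²). Then for every measurable function u : [0, t] → ℝ with |u(s)| ≤ 1 for almost every s ∈ [0, t] and ∫₀ᵗ f(t − s) u(s) ds = ∫₀ᵗ f(t − s) u*(s) ds, one has ∫₀ᵗ (g/2) ( 1 − √(1 − u*(s)²) ) ds ≤ ∫₀ᵗ (g/2) ( 1 − √(1 − u(s)²) ) ds. -/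
/-!
For every `s`, `u*(s)` minimizes the pointwise Lagrangian `v ↦ (1 - √(1 - v²)) + ρ f(t-s) v`
over `|v| ≤ 1`, with minimum `1 - √(1 + ρ² f(t-s)²)`, the convex conjugate of the cost. Integrating
this pointwise inequality and cancelling the (equal) constraint terms gives the claim.
-/

open MeasureTheory Set

/-- Lagrange's identity `(1 + c²)(v² + a²) = (c v - a)² + (c a + v)²` with `a = √(1 - v²)`. -/
lemma neg_sqrt_one_add_sq_le_mul_sub_sqrt (c v : ℝ) (hv : |v| ≤ 1) :
    -√(1 + c ^ 2) ≤ c * v - √(1 - v ^ 2) := by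
  have hv2 : v ^ 2 ≤ 1 := (sq_le_one_iff_abs_le_one v).2 hv
  have ha : √(1 - v ^ 2) ^ 2 = 1 - v ^ 2 := Real.sq_sqrt (by linarith)
  have hb : √(1 + c ^ 2) ^ 2 = 1 + c ^ 2 := Real.sq_sqrt (by positivity)
  nlinarith [sq_nonneg (c * √(1 - v ^ 2) + v), Real.sqrt_nonneg (1 - v ^ 2),
    Real.sqrt_nonneg (1 + c ^ 2)]

lemma mul_neg_div_sqrt_sub_sqrt (c : ℝ) :
    c * (-c / √(1 + c ^ 2)) - √(1 - (-c / √(1 + c ^ 2)) ^ 2) = -√(1 + c ^ 2) := by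
  have hsq : √(1 + c ^ 2) ^ 2 = 1 + c ^ 2 := Real.sq_sqrt (by positivity)
  have hroot : 1 - (-c / √(1 + c ^ 2)) ^ 2 = (1 / √(1 + c ^ 2)) ^ 2 := by
    field_simp
    linarith
  rw [hroot, Real.sqrt_sq (by positivity)]
  field_simp
  linarith

lemma one_sub_sqrt_add_mul_le_of_abs_le_one (ρ x v : ℝ) (hv : |v| ≤ 1) :
    1 - √(1 - (-ρ * x / √(1 + ρ ^ 2 * x ^ 2)) ^ 2) + ρ * (x * (-ρ * x / √(1 + ρ ^ 2 * x ^ 2)))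
      ≤ 1 - √(1 - v ^ 2) + ρ * (x * v) := by
  have hmin := mul_neg_div_sqrt_sub_sqrt (ρ * x)
  have hle := neg_sqrt_one_add_sq_le_mul_sub_sqrt (ρ * x) v hv
  rw [mul_pow, ← neg_mul] at hmin
  rw [mul_pow] at hle
  linarith

lemma abs_one_sub_sqrt_one_sub_sq_le_one (v : ℝ) : |1 - √(1 - v ^ 2)| ≤ 1 := by
  have hle : √(1 - v ^ 2) ≤ 1 := Real.sqrt_le_one.2 (by nlinarith [sq_nonneg v])
  rw [abs_le]
  constructor <;> linarith [Real.sqrt_nonneg (1 - v ^ 2)]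

theorem integral_le_of_ae_add_le_add {α : Type*} [MeasurableSpace α] {μ : Measure α}
    {P Q L K : α → ℝ} (hP : Integrable P μ) (hQ : Integrable Q μ) (hL : Integrable L μ)
    (hK : Integrable K μ) (h : ∀ᵐ a ∂μ, P a + L a ≤ Q a + K a) (hLK : ∫ a, L a ∂μ = ∫ a, K a ∂μ) :
    ∫ a, P a ∂μ ≤ ∫ a, Q a ∂μ := by
  have hmono := integral_mono_ae (f := fun a => P a + L a) (g := fun a => Q a + K a)
    (hP.add hL) (hQ.add hK) h
  rw [integral_add hP hL, integral_add hQ hK, hLK] at hmono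
  linarith

/-- calculus-of-variations optimality (Section 5 of the paper): among all
controls `u` with `|u| ≤ 1` a.e. achieving the same value of the linear constraint
`∫₀ᵗ f(t−s) u(s) ds`, the cost `∫₀ᵗ (g/2)(1 − √(1 − u(s)²)) ds` is minimized by
`u*(s) = −ρ f(t−s)/√(1 + ρ² f(t−s)²)`. -/
theorem stmt_9 (t g ρ : ℝ) (ht : 0 < t) (hg : 0 < g) (f : ℝ → ℝ)
    (hf : ContinuousOn f (Set.Icc 0 t)) :
    ∀ u : ℝ → ℝ, Measurable u →
      (∀ᵐ s ∂(MeasureTheory.volume.restrict (Set.Icc (0 : ℝ) t)), |u s| ≤ 1) →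
      (∫ s in (0 : ℝ)..t, f (t - s) * u s) =
        (∫ s in (0 : ℝ)..t,
          f (t - s) * (-ρ * f (t - s) / Real.sqrt (1 + ρ ^ 2 * f (t - s) ^ 2))) →
      (∫ s in (0 : ℝ)..t,
          g / 2 * (1 - Real.sqrt (1 -
            (-ρ * f (t - s) / Real.sqrt (1 + ρ ^ 2 * f (t - s) ^ 2)) ^ 2)))
        ≤ ∫ s in (0 : ℝ)..t, g / 2 * (1 - Real.sqrt (1 - u s ^ 2)) := by
  intro u hu hub hcon
  have hF : ContinuousOn (fun s => f (t - s)) (Icc 0 t) :=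
    hf.comp (by fun_prop) fun s hs => ⟨by linarith [hs.2], by linarith [hs.1]⟩
  have hw : ContinuousOn (fun s => -ρ * f (t - s) / √(1 + ρ ^ 2 * f (t - s) ^ 2)) (Icc 0 t) :=
    (continuousOn_const.mul hF).div
      (continuousOn_const.add (continuousOn_const.mul (hF.pow 2))).sqrt fun s _ => by positivity
  have hu_int : IntegrableOn u (Icc 0 t) :=
    Integrable.of_bound hu.aestronglyMeasurable 1 (by simpa only [Real.norm_eq_abs] using hub)
  simp only [intervalIntegral.integral_of_le ht.le, ← integral_Icc_eq_integral_Ioc] at hcon ⊢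
  rw [integral_const_mul, integral_const_mul]
  refine mul_le_mul_of_nonneg_left ?_ (by positivity)
  refine integral_le_of_ae_add_le_add
    (L := fun s => ρ * (f (t - s) * (-ρ * f (t - s) / √(1 + ρ ^ 2 * f (t - s) ^ 2))))
    (K := fun s => ρ * (f (t - s) * u s))
    ((continuousOn_const.sub (continuousOn_const.sub (hw.pow 2)).sqrt).integrableOn_compact
      isCompact_Icc)
    (.of_bound (by fun_prop) 1 (ae_of_all _ fun s => abs_one_sub_sqrt_one_sub_sq_le_one (u s)))
    ((hF.mul hw).integrableOn_compact isCompact_Icc |>.const_mul ρ)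
    ((hu_int.continuousOn_mul hF isCompact_Icc).const_mul ρ)
    (hub.mono fun s hs => one_sub_sqrt_add_mul_le_of_abs_le_one ρ (f (t - s)) (u s) hs) ?_
  rw [integral_const_mul, integral_const_mul, hcon]
end

section
/- Let t > 0, σ₀ > 0, and let f : [0, t] → ℝ be continuous and not identically zero. For ρ ∈ ℝ define I(ρ) = ∫₀ᵗ σ₀ f(t − s) · ( −ρ f(t − s) / √(1 + ρ² f(t − s)²) ) ds. Then for every m ∈ ℝ with |m| < σ₀ ∫₀ᵗ |f(t − s)| ds there exists ρ ∈ ℝ such that I(ρ) = m. -/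
/-!
The integrand of `I(ρ)` is bounded by `σ₀ |f(t - s)|` uniformly in `ρ`, so by dominated convergence
`I` is continuous and tends to `∓ σ₀ ∫₀ᵗ |f(t - s)| ds` as `ρ → ±∞` (since `x / √(1 + x²) → 1`).
The target `m` lies strictly between these two limits, and the intermediate value theorem gives `ρ`.
-/

open Filter Set intervalIntegral
open scoped Topology

noncomputable section

/-- The optimal control `u*_ρ = -ρ c / √(1 + ρ² c²)` at a point where the kernel takes value `c`. -/
def optimalControl (ρ c : ℝ) : ℝ := -ρ * c / Real.sqrt (1 + ρ ^ 2 * c ^ 2)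

lemma abs_optimalControl_le_one (ρ c : ℝ) : |optimalControl ρ c| ≤ 1 := by
  have hpos : 0 < Real.sqrt (1 + ρ ^ 2 * c ^ 2) := Real.sqrt_pos.mpr (by positivity)
  have hle : |ρ * c| ≤ Real.sqrt (1 + ρ ^ 2 * c ^ 2) := by
    rw [← Real.sqrt_sq_eq_abs]
    exact Real.sqrt_le_sqrt (by nlinarith)
  rw [optimalControl, abs_div, abs_of_pos hpos, div_le_one hpos, neg_mul, abs_neg]
  exact hle

lemma continuous_optimalControl : Continuous fun p : ℝ × ℝ => optimalControl p.1 p.2 :=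
  Continuous.div (by fun_prop) (Real.continuous_sqrt.comp (by fun_prop))
    fun _ => (Real.sqrt_pos.mpr (by positivity)).ne'

lemma optimalControl_neg (ρ c : ℝ) : optimalControl (-ρ) c = -optimalControl ρ c := by
  simp only [optimalControl, neg_sq, neg_neg, neg_mul, neg_div]

lemma tendsto_div_sqrt_one_add_sq_atTop :
    Tendsto (fun x : ℝ => x / Real.sqrt (1 + x ^ 2)) atTop (𝓝 1) := by
  have hinv : Tendsto (fun x : ℝ => 1 / Real.sqrt ((x ^ 2)⁻¹ + 1)) atTop (𝓝 1) := by
    have h0 : Tendsto (fun x : ℝ => (x ^ 2)⁻¹) atTop (𝓝 0) :=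
      (tendsto_pow_atTop two_ne_zero).inv_tendsto_atTop
    simpa using ((h0.add_const 1).sqrt).inv₀ (by norm_num)
  refine hinv.congr' ?_
  filter_upwards [eventually_gt_atTop 0] with x hx
  rw [eq_div_iff (Real.sqrt_pos.mpr (by positivity)).ne', one_div, ← Real.sqrt_sq hx.le,
    ← Real.sqrt_inv, ← Real.sqrt_mul (by positivity)]
  congr 1
  field_simp
  exact Real.sq_sqrt (sq_nonneg x)

lemma tendsto_mul_optimalControl_atTop (c : ℝ) :
    Tendsto (fun ρ => c * optimalControl ρ c) atTop (𝓝 (-|c|)) := by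
  rcases eq_or_ne c 0 with rfl | hc
  · simp [optimalControl]
  -- `c u*_ρ = -|c| φ(ρ |c|)` with `φ(x) = x / √(1 + x²)`, and `ρ |c| → ∞`
  have hscale : Tendsto (fun ρ => ρ * |c|) atTop atTop :=
    tendsto_id.atTop_mul_const (abs_pos.mpr hc)
  have hlim := (tendsto_div_sqrt_one_add_sq_atTop.comp hscale).const_mul (-|c|)
  rw [mul_one] at hlim
  refine hlim.congr fun ρ => ?_
  simp only [Function.comp_apply, optimalControl, mul_pow, sq_abs]
  rw [mul_div_assoc', mul_div_assoc']
  congr 1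
  linear_combination (-ρ) * abs_mul_abs_self c

/-- The paper's `I(ρ)` is `reachedValue σ₀ (fun s => f (t - s)) 0 t ρ`. -/
def reachedValue (σ₀ : ℝ) (g : ℝ → ℝ) (a b ρ : ℝ) : ℝ :=
  ∫ s in a..b, σ₀ * g s * optimalControl ρ (g s)

section ReachedValue

variable {σ₀ : ℝ} {g : ℝ → ℝ} {a b : ℝ}

lemma reachedValue_neg (ρ : ℝ) : reachedValue σ₀ g a b (-ρ) = -reachedValue σ₀ g a b ρ := by
  simp only [reachedValue, optimalControl_neg, mul_neg, integral_neg]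

lemma tendsto_reachedValue_of_tendsto (hg : ContinuousOn g (uIcc a b)) {l : Filter ℝ}
    [l.IsCountablyGenerated] {F : ℝ → ℝ}
    (hF : ∀ s, Tendsto (fun ρ => σ₀ * g s * optimalControl ρ (g s)) l (𝓝 (F s))) :
    Tendsto (reachedValue σ₀ g a b) l (𝓝 (∫ s in a..b, F s)) := by
  refine tendsto_integral_filter_of_dominated_convergence (fun s => |σ₀| * |g s|)
    (Eventually.of_forall fun ρ => ?_) (Eventually.of_forall fun ρ => ?_)
    (continuousOn_const.mul hg.abs).intervalIntegrable (Eventually.of_forall fun s _ => hF s)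
  · have hcont : ContinuousOn (fun s => σ₀ * g s * optimalControl ρ (g s)) (uIcc a b) :=
      (continuousOn_const.mul hg).mul
        (continuous_optimalControl.comp_continuousOn (continuousOn_const.prodMk hg))
    exact (hcont.mono uIoc_subset_uIcc).aestronglyMeasurable measurableSet_uIoc
  · refine Eventually.of_forall fun s _ => ?_
    rw [Real.norm_eq_abs, abs_mul, abs_mul]
    exact mul_le_of_le_one_right (by positivity) (abs_optimalControl_le_one ρ (g s))

lemma continuous_reachedValue (hg : ContinuousOn g (uIcc a b)) :
    Continuous (reachedValue σ₀ g a b) :=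
  continuous_iff_continuousAt.mpr fun ρ₀ => tendsto_reachedValue_of_tendsto hg fun s =>
    ((continuous_optimalControl.comp (continuous_id.prodMk continuous_const)).tendsto ρ₀).const_mul
      (σ₀ * g s)

lemma tendsto_reachedValue_atTop (hg : ContinuousOn g (uIcc a b)) :
    Tendsto (reachedValue σ₀ g a b) atTop (𝓝 (-(σ₀ * ∫ s in a..b, |g s|))) := by
  rw [← integral_const_mul, ← integral_neg]
  refine tendsto_reachedValue_of_tendsto hg fun s => ?_
  simpa only [mul_assoc, mul_neg] using (tendsto_mul_optimalControl_atTop (g s)).const_mul σ₀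

lemma exists_reachedValue_eq (hg : ContinuousOn g (uIcc a b)) {m : ℝ}
    (hm : |m| < σ₀ * ∫ s in a..b, |g s|) : ∃ ρ, reachedValue σ₀ g a b ρ = m := by
  have hlim := tendsto_reachedValue_atTop (σ₀ := σ₀) hg
  obtain ⟨ρ₁, hρ₁⟩ := (hlim.eventually_lt_const (neg_lt_of_abs_lt hm)).exists
  obtain ⟨ρ₂, hρ₂⟩ := (hlim.eventually_lt_const (neg_lt_neg_iff.mpr (lt_of_abs_lt hm))).exists
  have hmem : m ∈ uIcc (reachedValue σ₀ g a b ρ₁) (reachedValue σ₀ g a b (-ρ₂)) := by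
    rw [reachedValue_neg]
    exact mem_uIcc.mpr (Or.inl ⟨hρ₁.le, by linarith⟩)
  obtain ⟨ρ, -, hρ⟩ := intermediate_value_uIcc (continuous_reachedValue hg).continuousOn hmem
  exact ⟨ρ, hρ⟩

end ReachedValue

end

theorem stmt_10_general (t σ₀ : ℝ) (ht : 0 < t) (f : ℝ → ℝ)
    (hf : ContinuousOn f (Set.Icc 0 t))
    (m : ℝ) (hm : |m| < σ₀ * ∫ s in (0 : ℝ)..t, |f (t - s)|) :
    ∃ ρ : ℝ,
      (∫ s in (0 : ℝ)..t,
        σ₀ * f (t - s) * (-ρ * f (t - s) / Real.sqrt (1 + ρ ^ 2 * f (t - s) ^ 2))) = m := by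
  have hg : ContinuousOn (fun s => f (t - s)) (uIcc 0 t) := by
    refine hf.comp (by fun_prop) fun s hs => ?_
    rw [uIcc_of_le ht.le] at hs
    exact ⟨by linarith [hs.2], by linarith [hs.1]⟩
  exact exists_reachedValue_eq hg hm

/-- existence of the Lagrange multiplier `ρ` (Section 5 of the paper):
for any target `m` of modulus strictly smaller than the maximal reachable value
`σ₀ ∫₀ᵗ |f(t−s)| ds`, there is `ρ ∈ ℝ` with
`∫₀ᵗ σ₀ f(t−s) · (−ρ f(t−s)/√(1 + ρ² f(t−s)²)) ds = m`. -/
theorem stmt_10 (t σ₀ : ℝ) (ht : 0 < t) (hσ : 0 < σ₀) (f : ℝ → ℝ)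
    (hf : ContinuousOn f (Set.Icc 0 t))
    (hne : ∃ s ∈ Set.Icc (0 : ℝ) t, f s ≠ 0)
    (m : ℝ) (hm : |m| < σ₀ * ∫ s in (0 : ℝ)..t, |f (t - s)|) :
    ∃ ρ : ℝ,
      (∫ s in (0 : ℝ)..t,
        σ₀ * f (t - s) * (-ρ * f (t - s) / Real.sqrt (1 + ρ ^ 2 * f (t - s) ^ 2))) = m :=
  stmt_10_general t σ₀ ht f hf m hm
end

section
/- Let r > 0 and let μ be a finite signed measure on the interval [−r, 0]. Then there exists a unique continuous function f : [0, ∞) → ℝ such that, defining f(v) = 0 for v < 0, one has f(t) = 1 + ∫₀ᵗ ( ∫_{[−r,0]} f(s + θ) dμ(θ) ) ds for all t ≥ 0. -/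
/-!
Picard iteration in a Bielecki-weighted sup norm. With `C` the total variation of `μ` and
`K = 2C + 1`, a function bounded by `D e^{Kv}` on `(-∞, t]` has a delay term bounded by
`C D e^{Ks}` at `s ≤ t`, so its primitive is bounded by `(C / K) D e^{Kt} ≤ D e^{Kt} / 2`.
Writing `f t = e^{Kt} g t`, the equation becomes the fixed-point problem
`g t = e^{-Kt} (1 + ∫₀ᵗ …)`, a `1/2`-contraction on bounded continuous functions on `[0, ∞)`.
For uniqueness, the difference `h` of two solutions satisfies
`sup_{[0,u]} e^{-Kv} |h v| ≤ ½ sup_{[0,u]} e^{-Kv} |h v|`, so it vanishes.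
-/

/-- Integral of a real-valued function against a finite signed measure, defined through the
Jordan decomposition `μ = μ⁺ − μ⁻`. -/
noncomputable def sintegral {α : Type*} [MeasurableSpace α]
    (μ : MeasureTheory.SignedMeasure α) (f : α → ℝ) : ℝ :=
  (∫ x, f x ∂μ.toJordanDecomposition.posPart) - ∫ x, f x ∂μ.toJordanDecomposition.negPart

open MeasureTheory Set Real

section SignedIntegral

variable {α : Type*} [MeasurableSpace α] (μ : SignedMeasure α)

lemma abs_sintegral_le {F : α → ℝ} {M : ℝ} (hF : ∀ x, |F x| ≤ M) :
    |sintegral μ F| ≤ μ.totalVariation.real univ * M := by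
  have hle (ν : Measure α) [IsFiniteMeasure ν] : |∫ x, F x ∂ν| ≤ M * ν.real univ :=
    norm_integral_le_of_norm_le_const (f := F) (.of_forall hF)
  rw [SignedMeasure.totalVariation, measureReal_add_apply]
  calc |sintegral μ F| ≤ _ := abs_sub _ _
    _ ≤ _ := add_le_add (hle _) (hle _)
    _ = _ := by ring

lemma sintegral_sub {F G : α → ℝ} (hF : Integrable F μ.totalVariation)
    (hG : Integrable G μ.totalVariation) :
    sintegral μ (fun x => F x - G x) = sintegral μ F - sintegral μ G := by
  have hpos {H : α → ℝ} (hH : Integrable H μ.totalVariation) :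
      Integrable H μ.toJordanDecomposition.posPart :=
    hH.mono_measure (Measure.le_add_right le_rfl)
  have hneg {H : α → ℝ} (hH : Integrable H μ.totalVariation) :
      Integrable H μ.toJordanDecomposition.negPart :=
    hH.mono_measure (Measure.le_add_left le_rfl)
  unfold sintegral
  rw [integral_sub (hpos hF) (hpos hG), integral_sub (hneg hF) (hneg hG)]
  ring

lemma measurable_sintegral_comp_add {c : α → ℝ} (hc : Measurable c) {F : ℝ → ℝ}
    (hF : Measurable F) : Measurable fun s => sintegral μ (fun x => F (s + c x)) := by
  have hF' : StronglyMeasurable fun p : ℝ × α => F (p.1 + c p.2) :=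
    (hF.comp (measurable_fst.add (hc.comp measurable_snd))).stronglyMeasurable
  exact hF'.integral_prod_right'.measurable.sub hF'.integral_prod_right'.measurable

end SignedIntegral

lemma integral_const_mul_exp_mul {K : ℝ} (hK : K ≠ 0) (c t : ℝ) :
    ∫ s in (0 : ℝ)..t, c * exp (K * s) = c / K * (exp (K * t) - 1) := by
  rw [intervalIntegral.integral_const_mul, intervalIntegral.integral_comp_mul_left _ hK,
    integral_exp]
  simp only [mul_zero, exp_zero, smul_eq_mul]
  field_simp

namespace DelayEquation

structure IsCausalContinuous (f : ℝ → ℝ) : Prop where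
  eq_zero_of_neg : ∀ v < 0, f v = 0
  continuousOn : ContinuousOn f (Ici 0)

namespace IsCausalContinuous

variable {f g : ℝ → ℝ}

lemma sub (hf : IsCausalContinuous f) (hg : IsCausalContinuous g) :
    IsCausalContinuous (f - g) where
  eq_zero_of_neg v hv := by simp [hf.eq_zero_of_neg v hv, hg.eq_zero_of_neg v hv]
  continuousOn := hf.continuousOn.sub hg.continuousOn

lemma measurable (hf : IsCausalContinuous f) : Measurable f := by
  classical
  have hpiece : (Ici (0 : ℝ)).piecewise f 0 = f := by
    ext v
    by_cases hv : 0 ≤ v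
    · simp [hv]
    · simp [hv, hf.eq_zero_of_neg v (not_le.mp hv)]
  rw [← hpiece]
  exact hf.continuousOn.measurable_piecewise continuousOn_const measurableSet_Ici

lemma exists_bound_Iic (hf : IsCausalContinuous f) (T : ℝ) :
    ∃ M, ∀ v ≤ T, |f v| ≤ M := by
  obtain ⟨M, hM⟩ := isCompact_Icc.exists_bound_of_continuousOn
    (hf.continuousOn.mono (Icc_subset_Ici_self : Icc 0 T ⊆ Ici 0))
  refine ⟨max M 0, fun v hv => ?_⟩
  rcases lt_or_ge v 0 with hv0 | hv0
  · simp [hf.eq_zero_of_neg v hv0]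
  · exact (hM v ⟨hv0, hv⟩).trans (le_max_left _ _)

end IsCausalContinuous

section DelayTerm

variable {r : ℝ} (μ : SignedMeasure (Icc (-r) (0 : ℝ)))

noncomputable def delayTerm (f : ℝ → ℝ) (s : ℝ) : ℝ :=
  sintegral μ fun θ => f (s + θ.1)

lemma abs_delayTerm_le {f : ℝ → ℝ} {s M : ℝ} (hf : ∀ v ≤ s, |f v| ≤ M) :
    |delayTerm μ f s| ≤ μ.totalVariation.real univ * M :=
  abs_sintegral_le μ fun θ => hf _ (add_le_of_nonpos_right θ.2.2)

variable {μ} {f g : ℝ → ℝ}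

lemma IsCausalContinuous.integrable_comp_add (hf : IsCausalContinuous f) (s : ℝ) :
    Integrable (fun θ : Icc (-r) (0 : ℝ) => f (s + θ.1)) μ.totalVariation := by
  obtain ⟨M, hM⟩ := hf.exists_bound_Iic s
  have hmeas : Measurable fun θ : Icc (-r) (0 : ℝ) => f (s + θ.1) :=
    hf.measurable.comp (measurable_const.add measurable_subtype_coe)
  exact .of_bound hmeas.aestronglyMeasurable M
    (.of_forall fun θ => hM _ (add_le_of_nonpos_right θ.2.2))

lemma IsCausalContinuous.intervalIntegrable_delayTerm (hf : IsCausalContinuous f) (a b : ℝ) :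
    IntervalIntegrable (delayTerm μ f) volume a b := by
  obtain ⟨M, hM⟩ := hf.exists_bound_Iic (max a b)
  have hmeas : Measurable (delayTerm μ f) :=
    measurable_sintegral_comp_add μ measurable_subtype_coe hf.measurable
  refine intervalIntegrable_iff.2 <| .of_bound measure_Ioc_lt_top hmeas.aestronglyMeasurable _ <|
    (ae_restrict_iff' measurableSet_uIoc).2 <| .of_forall fun s hs =>
      abs_delayTerm_le μ fun v hv => hM v (hv.trans hs.2)

lemma delayTerm_sub (hf : IsCausalContinuous f) (hg : IsCausalContinuous g) :
    delayTerm μ (f - g) = delayTerm μ f - delayTerm μ g := by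
  ext s
  exact sintegral_sub μ (hf.integrable_comp_add s) (hg.integrable_comp_add s)

lemma integral_delayTerm_sub (hf : IsCausalContinuous f) (hg : IsCausalContinuous g) (t : ℝ) :
    ∫ s in (0 : ℝ)..t, delayTerm μ (f - g) s =
      (∫ s in (0 : ℝ)..t, delayTerm μ f s) - ∫ s in (0 : ℝ)..t, delayTerm μ g s := by
  rw [delayTerm_sub hf hg]
  exact intervalIntegral.integral_sub (hf.intervalIntegrable_delayTerm 0 t)
    (hg.intervalIntegrable_delayTerm 0 t)

end DelayTerm

structure IsFundamentalSolution {r : ℝ} (μ : SignedMeasure (Icc (-r) (0 : ℝ)))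
    (f : ℝ → ℝ) : Prop extends IsCausalContinuous f where
  eq_one_add_integral : ∀ t, 0 ≤ t → f t = 1 + ∫ s in (0 : ℝ)..t, delayTerm μ f s

section Bielecki

variable {r : ℝ} (μ : SignedMeasure (Icc (-r) (0 : ℝ)))

noncomputable def bieleckiRate : ℝ := 2 * μ.totalVariation.real univ + 1

lemma bieleckiRate_pos : 0 < bieleckiRate μ := by
  unfold bieleckiRate; positivity

variable {μ}

lemma abs_integral_delayTerm_le {f : ℝ → ℝ} {t D : ℝ} (ht : 0 ≤ t)
    (hf : ∀ v ≤ t, |f v| ≤ D * exp (bieleckiRate μ * v)) :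
    |∫ s in (0 : ℝ)..t, delayTerm μ f s| ≤ D / 2 * exp (bieleckiRate μ * t) := by
  set K := bieleckiRate μ
  have hK : 0 < K := bieleckiRate_pos μ
  have hD : 0 ≤ D := nonneg_of_mul_nonneg_left ((abs_nonneg _).trans (hf t le_rfl)) (exp_pos _)
  have hpointwise : ∀ s ∈ Ioc 0 t, ‖delayTerm μ f s‖ ≤ K / 2 * D * exp (K * s) := by
    intro s hs
    calc ‖delayTerm μ f s‖ ≤ μ.totalVariation.real univ * (D * exp (K * s)) :=
          abs_delayTerm_le μ fun v hv =>
            (hf v (hv.trans hs.2)).trans (by gcongr)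
      _ ≤ K / 2 * D * exp (K * s) := by
          rw [← mul_assoc]; gcongr; unfold K bieleckiRate; linarith
  calc |∫ s in (0 : ℝ)..t, delayTerm μ f s|
      ≤ ∫ s in (0 : ℝ)..t, K / 2 * D * exp (K * s) :=
        intervalIntegral.norm_integral_le_of_norm_le ht (.of_forall hpointwise)
          ((by fun_prop : Continuous fun s => K / 2 * D * exp (K * s)).intervalIntegrable _ _)
    _ = D / 2 * (exp (K * t) - 1) := by
        rw [integral_const_mul_exp_mul hK.ne']
        field_simp
    _ ≤ D / 2 * exp (K * t) := by gcongr; linarith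

end Bielecki

section Existence

open scoped BoundedContinuousFunction

variable {r : ℝ} (μ : SignedMeasure (Icc (-r) (0 : ℝ)))

noncomputable def ofWeighted (g : Ici (0 : ℝ) →ᵇ ℝ) (v : ℝ) : ℝ :=
  if hv : 0 ≤ v then exp (bieleckiRate μ * v) * g ⟨v, hv⟩ else 0

lemma ofWeighted_of_nonneg (g : Ici (0 : ℝ) →ᵇ ℝ) {v : ℝ} (hv : 0 ≤ v) :
    ofWeighted μ g v = exp (bieleckiRate μ * v) * g ⟨v, hv⟩ :=
  dif_pos hv

lemma isCausalContinuous_ofWeighted (g : Ici (0 : ℝ) →ᵇ ℝ) :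
    IsCausalContinuous (ofWeighted μ g) where
  eq_zero_of_neg v hv := dif_neg hv.not_ge
  continuousOn := by
    have hcont : Continuous fun v : ℝ =>
        exp (bieleckiRate μ * v) * g ⟨max v 0, le_max_right v 0⟩ := by
      fun_prop
    refine hcont.continuousOn.congr fun v (hv : 0 ≤ v) => ?_
    simp only [ofWeighted_of_nonneg μ g hv, max_eq_left hv]

lemma ofWeighted_sub (g h : Ici (0 : ℝ) →ᵇ ℝ) :
    ofWeighted μ (g - h) = ofWeighted μ g - ofWeighted μ h := by
  ext v
  by_cases hv : 0 ≤ v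
  · simp only [ofWeighted_of_nonneg μ _ hv, Pi.sub_apply, BoundedContinuousFunction.coe_sub,
      mul_sub]
  · simp [ofWeighted, hv]

lemma abs_ofWeighted_le (g : Ici (0 : ℝ) →ᵇ ℝ) (v : ℝ) :
    |ofWeighted μ g v| ≤ ‖g‖ * exp (bieleckiRate μ * v) := by
  by_cases hv : 0 ≤ v
  · rw [ofWeighted_of_nonneg μ g hv, abs_mul, abs_exp, mul_comm]
    gcongr
    exact g.norm_coe_le_norm _
  · rw [(isCausalContinuous_ofWeighted μ g).eq_zero_of_neg v (not_le.mp hv), abs_zero]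
    positivity

noncomputable def picardFun (g : Ici (0 : ℝ) →ᵇ ℝ) (t : ℝ) : ℝ :=
  exp (-(bieleckiRate μ * t)) * (1 + ∫ s in (0 : ℝ)..t, delayTerm μ (ofWeighted μ g) s)

lemma continuous_picardFun (g : Ici (0 : ℝ) →ᵇ ℝ) : Continuous (picardFun μ g) := by
  have := intervalIntegral.continuous_primitive
    ((isCausalContinuous_ofWeighted μ g).intervalIntegrable_delayTerm (μ := μ)) 0
  unfold picardFun
  fun_prop

lemma abs_integral_delayTerm_ofWeighted_le (g : Ici (0 : ℝ) →ᵇ ℝ) {t : ℝ} (ht : 0 ≤ t) :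
    exp (-(bieleckiRate μ * t)) * |∫ s in (0 : ℝ)..t, delayTerm μ (ofWeighted μ g) s| ≤
      ‖g‖ / 2 := by
  calc _ ≤ exp (-(bieleckiRate μ * t)) * (‖g‖ / 2 * exp (bieleckiRate μ * t)) := by
        gcongr
        exact abs_integral_delayTerm_le ht fun v _ => abs_ofWeighted_le μ g v
    _ = ‖g‖ / 2 := by rw [mul_left_comm, ← exp_add, neg_add_cancel, exp_zero, mul_one]

lemma abs_picardFun_le (g : Ici (0 : ℝ) →ᵇ ℝ) {t : ℝ} (ht : 0 ≤ t) :
    |picardFun μ g t| ≤ 1 + ‖g‖ / 2 := by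
  have hexp : exp (-(bieleckiRate μ * t)) ≤ 1 :=
    exp_le_one_iff.2 (neg_nonpos.2 (mul_nonneg (bieleckiRate_pos μ).le ht))
  calc |picardFun μ g t|
      ≤ exp (-(bieleckiRate μ * t)) *
          (1 + |∫ s in (0 : ℝ)..t, delayTerm μ (ofWeighted μ g) s|) := by
        rw [picardFun, abs_mul, abs_exp]
        gcongr
        exact (abs_add_le _ _).trans_eq (by rw [abs_one])
    _ ≤ 1 + ‖g‖ / 2 := by
        rw [mul_one_add]
        exact add_le_add hexp (abs_integral_delayTerm_ofWeighted_le μ g ht)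

noncomputable def picard (g : Ici (0 : ℝ) →ᵇ ℝ) : Ici (0 : ℝ) →ᵇ ℝ :=
  .ofNormedAddCommGroup (fun t => picardFun μ g t)
    ((continuous_picardFun μ g).comp continuous_subtype_val) (1 + ‖g‖ / 2)
    fun t => abs_picardFun_le μ g t.2

lemma picardFun_sub (g h : Ici (0 : ℝ) →ᵇ ℝ) (t : ℝ) :
    picardFun μ g t - picardFun μ h t =
      exp (-(bieleckiRate μ * t)) *
        ∫ s in (0 : ℝ)..t, delayTerm μ (ofWeighted μ (g - h)) s := by
  rw [ofWeighted_sub, integral_delayTerm_sub (isCausalContinuous_ofWeighted μ g)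
    (isCausalContinuous_ofWeighted μ h), picardFun, picardFun]
  ring

lemma contractingWith_picard : ContractingWith 2⁻¹ (picard μ) := by
  refine ⟨by norm_num, LipschitzWith.of_dist_le_mul fun g h => ?_⟩
  refine (BoundedContinuousFunction.dist_le (by positivity)).2 fun ⟨t, ht⟩ => ?_
  calc dist (picardFun μ g t) (picardFun μ h t)
      = exp (-(bieleckiRate μ * t)) *
          |∫ s in (0 : ℝ)..t, delayTerm μ (ofWeighted μ (g - h)) s| := by
        rw [Real.dist_eq, picardFun_sub, abs_mul, abs_exp]
    _ ≤ ‖g - h‖ / 2 := abs_integral_delayTerm_ofWeighted_le μ (g - h) ht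
    _ = _ := by rw [dist_eq_norm, NNReal.coe_inv, NNReal.coe_ofNat]; ring

lemma exists_isFundamentalSolution :
    ∃ f, IsFundamentalSolution μ f := by
  set g := (contractingWith_picard μ).fixedPoint
  have hg : picard μ g = g := (contractingWith_picard μ).fixedPoint_isFixedPt
  refine ⟨ofWeighted μ g, ⟨isCausalContinuous_ofWeighted μ g, fun t ht => ?_⟩⟩
  have hgt : g ⟨t, ht⟩ = picardFun μ g t := (DFunLike.congr_fun hg ⟨t, ht⟩).symm
  rw [ofWeighted_of_nonneg μ g ht, hgt, picardFun, ← mul_assoc, ← exp_add, add_neg_cancel,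
    exp_zero, one_mul]

end Existence

section Solution

variable {r : ℝ} {μ : SignedMeasure (Icc (-r) (0 : ℝ))}

lemma IsCausalContinuous.eq_zero_of_eq_integral {h : ℝ → ℝ} (hh : IsCausalContinuous h)
    (heq : ∀ t, 0 ≤ t → h t = ∫ s in (0 : ℝ)..t, delayTerm μ h s) (u : ℝ) :
    h u = 0 := by
  rcases lt_or_ge u 0 with hu | hu
  · exact hh.eq_zero_of_neg u hu
  set K := bieleckiRate μ
  obtain ⟨v₀, hv₀, hmax⟩ := isCompact_Icc.exists_isMaxOn (nonempty_Icc.2 hu)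
    ((continuous_exp.comp_continuousOn (continuousOn_const.mul continuousOn_id).neg).mul
      (hh.continuousOn.mono Icc_subset_Ici_self).abs)
  set D := exp (-(K * v₀)) * |h v₀|
  have hD : 0 ≤ D := by positivity
  have hbound : ∀ v ≤ u, |h v| ≤ D * exp (K * v) := by
    intro v hv
    rcases lt_or_ge v 0 with hv0 | hv0
    · rw [hh.eq_zero_of_neg v hv0, abs_zero]; positivity
    · have hle : exp (-(K * v)) * |h v| ≤ D := hmax ⟨hv0, hv⟩
      rwa [exp_neg, inv_mul_le_iff₀ (exp_pos _), mul_comm] at hle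
  have hhalf : D ≤ D / 2 := by
    calc D ≤ exp (-(K * v₀)) * (D / 2 * exp (K * v₀)) := by
          show exp (-(K * v₀)) * |h v₀| ≤ _
          gcongr
          rw [heq v₀ hv₀.1]
          exact abs_integral_delayTerm_le hv₀.1 fun v hv => hbound v (hv.trans hv₀.2)
      _ = D / 2 := by rw [mul_left_comm, ← exp_add, neg_add_cancel, exp_zero, mul_one]
  have hD0 : D = 0 := by linarith
  simpa [hD0] using hbound u le_rfl

lemma IsFundamentalSolution.unique {f g : ℝ → ℝ} (hf : IsFundamentalSolution μ f)
    (hg : IsFundamentalSolution μ g) : f = g := by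
  refine sub_eq_zero.1 <| funext <|
    (hf.sub hg.toIsCausalContinuous).eq_zero_of_eq_integral (μ := μ) fun t ht => ?_
  rw [integral_delayTerm_sub hf.toIsCausalContinuous hg.toIsCausalContinuous, Pi.sub_apply,
    hf.eq_one_add_integral t ht, hg.eq_one_add_integral t ht]
  ring

end Solution

end DelayEquation

theorem stmt_12_general (r : ℝ)
    (μ : MeasureTheory.SignedMeasure (Set.Icc (-r) (0 : ℝ))) :
    ∃ f : ℝ → ℝ,
      ((∀ v : ℝ, v < 0 → f v = 0) ∧ ContinuousOn f (Set.Ici 0) ∧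
        ∀ t : ℝ, 0 ≤ t →
          f t = 1 + ∫ s in (0 : ℝ)..t, sintegral μ (fun θ => f (s + θ.1))) ∧
      ∀ g : ℝ → ℝ,
        ((∀ v : ℝ, v < 0 → g v = 0) ∧ ContinuousOn g (Set.Ici 0) ∧
          ∀ t : ℝ, 0 ≤ t →
            g t = 1 + ∫ s in (0 : ℝ)..t, sintegral μ (fun θ => g (s + θ.1))) →
        ∀ v : ℝ, g v = f v := by
  obtain ⟨f, hf⟩ := DelayEquation.exists_isFundamentalSolution μ
  refine ⟨f, ⟨hf.eq_zero_of_neg, hf.continuousOn, hf.eq_one_add_integral⟩, ?_⟩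
  rintro g ⟨hg₀, hgc, hgeq⟩
  exact congrFun (DelayEquation.IsFundamentalSolution.unique ⟨⟨hg₀, hgc⟩, hgeq⟩ hf)

/-- existence and uniqueness of the fundamental solution of the scalar linear
delay equation: a function `f`, vanishing on `(-∞, 0)`, continuous on `[0, ∞)`, with
`f(t) = 1 + ∫₀ᵗ ∫_{[-r,0]} f(s+θ) dμ(θ) ds` for all `t ≥ 0`; it is unique among such
functions. -/
theorem stmt_12 (r : ℝ) (hr : 0 < r)
    (μ : MeasureTheory.SignedMeasure (Set.Icc (-r) (0 : ℝ))) :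
    ∃ f : ℝ → ℝ,
      ((∀ v : ℝ, v < 0 → f v = 0) ∧ ContinuousOn f (Set.Ici 0) ∧
        ∀ t : ℝ, 0 ≤ t →
          f t = 1 + ∫ s in (0 : ℝ)..t, sintegral μ (fun θ => f (s + θ.1))) ∧
      ∀ g : ℝ → ℝ,
        ((∀ v : ℝ, v < 0 → g v = 0) ∧ ContinuousOn g (Set.Ici 0) ∧
          ∀ t : ℝ, 0 ≤ t →
            g t = 1 + ∫ s in (0 : ℝ)..t, sintegral μ (fun θ => g (s + θ.1))) →
        ∀ v : ℝ, g v = f v :=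
  stmt_12_general r μ
end

section
/- Let r > 0 and let μ be a finite signed measure on the interval [−r, 0]. Let f : ℝ → ℝ satisfy f(v) = 0 for v < 0, f continuous on [0, ∞), and f(t) = 1 + ∫₀ᵗ ( ∫_{[−r,0]} f(s + θ) dμ(θ) ) ds for all t ≥ 0. Let h : [0, ∞) → ℝ be continuous. Define φ : ℝ → ℝ by φ(v) = ∫₀ᵛ f(v − s) h(s) ds for v ≥ 0 and φ(v) = 0 for v < 0. Then for every t ≥ 0: φ(t) = ∫₀ᵗ ( ∫_{[−r,0]} φ(u + θ) dμ(θ) + h(u) ) du. -/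
open MeasureTheory Set Function

section SignedIntegral

variable {α : Type*} [MeasurableSpace α]

lemma sintegral_mul_const (μ : SignedMeasure α) (g : α → ℝ) (c : ℝ) :
    sintegral μ (fun θ => g θ * c) = sintegral μ g * c := by
  simp only [sintegral, integral_mul_const, sub_mul]

lemma measurable_intervalIntegral_of_uncurry {β : Type*} [MeasurableSpace β]
    {F : β → ℝ → ℝ} (hF : Measurable (uncurry F)) (a b : ℝ) :
    Measurable fun x => ∫ s in a..b, F x s :=
  (hF.stronglyMeasurable.integral_prod_right' (ν := volume.restrict (Ioc a b))).measurable.sub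
    (hF.stronglyMeasurable.integral_prod_right' (ν := volume.restrict (Ioc b a))).measurable

lemma integrable_uncurry_of_norm_le (ν : Measure α) [IsFiniteMeasure ν] {F : ℝ → α → ℝ}
    {a b C : ℝ} (hF : Measurable (uncurry F))
    (hC : ∀ u ∈ uIoc a b, ∀ θ, ‖F u θ‖ ≤ C) :
    Integrable (uncurry F) ((volume.restrict (uIoc a b)).prod ν) := by
  have : IsFiniteMeasure (volume.restrict (uIoc a b)) :=
    isFiniteMeasure_restrict.mpr measure_Ioc_lt_top.ne
  refine Integrable.of_bound hF.aestronglyMeasurable C ?_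
  filter_upwards [Measure.quasiMeasurePreserving_fst.ae (ae_restrict_mem measurableSet_uIoc)]
    with p hp using hC p.1 hp p.2

lemma intervalIntegrable_sintegral (μ : SignedMeasure α) {F : ℝ → α → ℝ} {a b C : ℝ}
    (hF : Measurable (uncurry F)) (hC : ∀ u ∈ uIoc a b, ∀ θ, ‖F u θ‖ ≤ C) :
    IntervalIntegrable (fun u => sintegral μ (F u)) volume a b :=
  (intervalIntegrable_iff.mpr (integrable_uncurry_of_norm_le _ hF hC).integral_prod_left).sub
    (intervalIntegrable_iff.mpr (integrable_uncurry_of_norm_le _ hF hC).integral_prod_left)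

lemma intervalIntegral_sintegral_swap (μ : SignedMeasure α) {F : ℝ → α → ℝ} {a b C : ℝ}
    (hF : Measurable (uncurry F)) (hC : ∀ u ∈ uIoc a b, ∀ θ, ‖F u θ‖ ≤ C) :
    ∫ u in a..b, sintegral μ (F u) = sintegral μ (fun θ => ∫ u in a..b, F u θ) := by
  have hint := fun (ν : Measure α) [IsFiniteMeasure ν] =>
    intervalIntegrable_iff.mpr (integrable_uncurry_of_norm_le ν hF hC).integral_prod_left
  rw [sintegral, ← intervalIntegral_integral_swap (integrable_uncurry_of_norm_le _ hF hC),
    ← intervalIntegral_integral_swap (integrable_uncurry_of_norm_le _ hF hC)]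
  exact intervalIntegral.integral_sub (hint _) (hint _)

lemma intervalIntegral_comm_of_norm_le {F : ℝ → ℝ → ℝ} {a b c d C : ℝ}
    (hF : Measurable (uncurry F)) (hC : ∀ u ∈ uIoc a b, ∀ s ∈ uIoc c d, ‖F u s‖ ≤ C) :
    ∫ u in a..b, ∫ s in c..d, F u s = ∫ s in c..d, ∫ u in a..b, F u s := by
  refine intervalIntegral_intervalIntegral_swap (IntegrableOn.of_bound ?_
    hF.aestronglyMeasurable.restrict C ?_)
  · exact (measure_mono (prod_mono uIoc_subset_uIcc uIoc_subset_uIcc)).trans_lt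
      (isCompact_uIcc.prod isCompact_uIcc).measure_lt_top
  · exact ae_restrict_of_forall_mem (measurableSet_uIoc.prod measurableSet_uIoc)
      fun p hp => hC p.1 hp.1 p.2 hp.2

lemma intervalIntegrable_sintegral_intervalIntegral (μ : SignedMeasure α)
    {K : ℝ → ℝ → α → ℝ} {a b c d C : ℝ}
    (hK : Measurable fun p : ℝ × ℝ × α => K p.1 p.2.1 p.2.2)
    (hC : ∀ u ∈ uIoc a b, ∀ s ∈ uIoc c d, ∀ θ, ‖K u s θ‖ ≤ C) :
    IntervalIntegrable (fun u => sintegral μ (fun θ => ∫ s in c..d, K u s θ)) volume a b :=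
  intervalIntegrable_sintegral μ (F := fun u θ => ∫ s in c..d, K u s θ)
    (measurable_intervalIntegral_of_uncurry (F := fun (p : ℝ × α) s => K p.1 s p.2)
      (hK.comp (f := fun q : (ℝ × α) × ℝ => (q.1.1, q.2, q.1.2)) (by fun_prop)) c d)
    fun u hu θ => intervalIntegral.norm_integral_le_of_norm_le_const fun s hs => hC u hu s hs θ

lemma intervalIntegral_sintegral_intervalIntegral_comm (μ : SignedMeasure α)
    {K : ℝ → ℝ → α → ℝ} {a b c d C : ℝ}
    (hK : Measurable fun p : ℝ × ℝ × α => K p.1 p.2.1 p.2.2)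
    (hC : ∀ u ∈ uIoc a b, ∀ s ∈ uIoc c d, ∀ θ, ‖K u s θ‖ ≤ C) :
    ∫ u in a..b, sintegral μ (fun θ => ∫ s in c..d, K u s θ)
      = ∫ s in c..d, sintegral μ (fun θ => ∫ u in a..b, K u s θ) := by
  have hG : Measurable (uncurry fun u θ => ∫ s in c..d, K u s θ) :=
    measurable_intervalIntegral_of_uncurry (F := fun (p : ℝ × α) s => K p.1 s p.2)
      (hK.comp (f := fun q : (ℝ × α) × ℝ => (q.1.1, q.2, q.1.2)) (by fun_prop)) c d
  have hI : Measurable (uncurry fun s θ => ∫ u in a..b, K u s θ) :=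
    measurable_intervalIntegral_of_uncurry (F := fun (p : ℝ × α) u => K u p.1 p.2)
      (hK.comp (f := fun q : (ℝ × α) × ℝ => (q.2, q.1.1, q.1.2)) (by fun_prop)) a b
  rw [intervalIntegral_sintegral_swap μ hG
      fun u hu θ => intervalIntegral.norm_integral_le_of_norm_le_const fun s hs => hC u hu s hs θ,
    intervalIntegral_sintegral_swap μ hI
      fun s hs θ => intervalIntegral.norm_integral_le_of_norm_le_const fun u hu => hC u hu s hs θ]
  congr 1
  funext θ
  exact intervalIntegral_comm_of_norm_le (F := fun u s => K u s θ)
    (hK.comp (f := fun q : ℝ × ℝ => (q.1, q.2, θ)) (by fun_prop))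
    fun u hu s hs => hC u hu s hs θ

end SignedIntegral

section Causal

variable {f : ℝ → ℝ}

lemma measurable_of_continuousOn_Ici (hf0 : ∀ v : ℝ, v < 0 → f v = 0)
    (hfc : ContinuousOn f (Ici 0)) : Measurable f := by
  have hpw : f = (Ici 0).piecewise f 0 := by
    funext x
    by_cases hx : 0 ≤ x
    · simp [hx]
    · simp [hx, hf0 x (not_le.mp hx)]
  rw [hpw]
  exact hfc.measurable_piecewise continuousOn_const measurableSet_Ici

lemma exists_norm_le_of_continuousOn_Ici (hf0 : ∀ v : ℝ, v < 0 → f v = 0)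
    (hfc : ContinuousOn f (Ici 0)) (M : ℝ) : ∃ C, ∀ x ≤ M, ‖f x‖ ≤ C := by
  obtain ⟨C, hC⟩ := isCompact_Icc.exists_bound_of_continuousOn
    (hfc.mono fun x (hx : x ∈ Icc 0 M) => hx.1)
  refine ⟨max C 0, fun x hx => ?_⟩
  rcases lt_or_ge x 0 with hx0 | hx0
  · simp [hf0 x hx0]
  · exact (hC x ⟨hx0, hx⟩).trans (le_max_left _ _)

lemma intervalIntegrable_of_continuousOn_Ici (hf0 : ∀ v : ℝ, v < 0 → f v = 0)
    (hfc : ContinuousOn f (Ici 0)) (a b : ℝ) : IntervalIntegrable f volume a b := by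
  obtain ⟨C, hC⟩ := exists_norm_le_of_continuousOn_Ici hf0 hfc (max a b)
  refine (intervalIntegrable_const (c := C)).mono_fun'
    (measurable_of_continuousOn_Ici hf0 hfc).aestronglyMeasurable ?_
  filter_upwards [ae_restrict_mem measurableSet_uIoc] with x hx using hC x hx.2

lemma integral_comp_add_right_of_nonpos (hf0 : ∀ v : ℝ, v < 0 → f v = 0)
    (hfi : ∀ a b, IntervalIntegrable f volume a b) {c : ℝ} (hc : c ≤ 0) (x : ℝ) :
    ∫ u in 0..x, f (u + c) = ∫ u in 0..x + c, f u := by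
  have hzero : ∫ u in c..0, f u = 0 := by
    rw [intervalIntegral.integral_of_le hc, integral_Ioc_eq_integral_Ioo]
    exact setIntegral_eq_zero_of_forall_eq_zero fun u hu => hf0 u hu.2
  rw [intervalIntegral.integral_comp_add_right, zero_add,
    ← intervalIntegral.integral_add_adjacent_intervals (hfi c 0) (hfi 0 (x + c)), hzero, zero_add]

lemma integral_comp_add_sub_of_nonpos (hf0 : ∀ v : ℝ, v < 0 → f v = 0)
    (hfi : ∀ a b, IntervalIntegrable f volume a b) {θ s : ℝ} (hθ : θ ≤ 0) (hs : 0 ≤ s)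
    (t : ℝ) :
    ∫ u in 0..t, f (u + θ - s) = ∫ u in 0..t - s, f (u + θ) := by
  simp_rw [add_sub_assoc]
  rw [integral_comp_add_right_of_nonpos hf0 hfi (by linarith) t,
    integral_comp_add_right_of_nonpos hf0 hfi hθ (t - s), sub_add_eq_add_sub, add_sub_assoc]

lemma integral_comp_sub_mul_eq_zero (hf0 : ∀ v : ℝ, v < 0 → f v = 0) (h : ℝ → ℝ)
    {v a b : ℝ} (hva : v ≤ a) (hab : a ≤ b) : ∫ s in a..b, f (v - s) * h s = 0 := by
  rw [intervalIntegral.integral_of_le hab]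
  exact setIntegral_eq_zero_of_forall_eq_zero fun s hs => by
    rw [hf0 _ (by linarith [hs.1]), zero_mul]

lemma integral_comp_sub_mul_eq_of_le (hf0 : ∀ v : ℝ, v < 0 → f v = 0)
    (hfc : ContinuousOn f (Ici 0)) {h : ℝ → ℝ} (hh : ContinuousOn h (Ici 0)) {v t : ℝ}
    (hv : 0 ≤ v) (hvt : v ≤ t) :
    ∫ s in 0..v, f (v - s) * h s = ∫ s in 0..t, f (v - s) * h s := by
  have hint : ∀ b, 0 ≤ b → IntervalIntegrable (fun s => f (v - s) * h s) volume 0 b :=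
    fun b hb => by
      refine IntervalIntegrable.mul_continuousOn ?_ (hh.mono ?_)
      · simpa using (intervalIntegrable_of_continuousOn_Ici hf0 hfc v (v - b)).comp_sub_left v
      · rw [uIcc_of_le hb]; exact Icc_subset_Ici_self
  have hsplit := intervalIntegral.integral_interval_sub_left (hint t (hv.trans hvt)) (hint v hv)
  rw [integral_comp_sub_mul_eq_zero hf0 h le_rfl hvt] at hsplit
  linarith

end Causal

section DelayEquation

variable {r : ℝ} (μ : SignedMeasure (Icc (-r) (0 : ℝ))) {f : ℝ → ℝ}

lemma sintegral_integral_comp_add_sub (hf0 : ∀ v : ℝ, v < 0 → f v = 0)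
    (hfc : ContinuousOn f (Ici 0))
    (hf : ∀ t : ℝ, 0 ≤ t →
      f t = 1 + ∫ s in (0 : ℝ)..t, sintegral μ (fun θ => f (s + θ.1)))
    {s t : ℝ} (hs : 0 ≤ s) (hst : s ≤ t) :
    sintegral μ (fun θ => ∫ u in 0..t, f (u + θ.1 - s)) = f (t - s) - 1 := by
  have hfm := measurable_of_continuousOn_Ici hf0 hfc
  have hfi := intervalIntegrable_of_continuousOn_Ici hf0 hfc
  obtain ⟨C, hC⟩ := exists_norm_le_of_continuousOn_Ici hf0 hfc (t - s)
  have hshift : (fun θ : Icc (-r) (0 : ℝ) => ∫ u in 0..t, f (u + θ.1 - s))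
      = fun θ => ∫ u in 0..t - s, f (u + θ.1) :=
    funext fun θ => integral_comp_add_sub_of_nonpos hf0 hfi θ.2.2 hs t
  rw [hshift, ← intervalIntegral_sintegral_swap μ (C := C) (by fun_prop),
    hf (t - s) (by linarith), add_sub_cancel_left]
  intro u hu θ
  rw [uIoc_of_le (by linarith)] at hu
  exact hC _ (by linarith [hu.2, θ.2.2])

lemma integral_sintegral_convolution_add (hf0 : ∀ v : ℝ, v < 0 → f v = 0)
    (hfc : ContinuousOn f (Ici 0))
    (hf : ∀ t : ℝ, 0 ≤ t →
      f t = 1 + ∫ s in (0 : ℝ)..t, sintegral μ (fun θ => f (s + θ.1)))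
    {h : ℝ → ℝ} (hh : Continuous h) {t : ℝ} (ht : 0 ≤ t) :
    ∫ u in 0..t, (sintegral μ (fun θ => ∫ s in 0..t, f (u + θ.1 - s) * h s) + h u)
      = ∫ s in 0..t, f (t - s) * h s := by
  have hfm := measurable_of_continuousOn_Ici hf0 hfc
  have hfi := intervalIntegrable_of_continuousOn_Ici hf0 hfc
  obtain ⟨Cf, hCf⟩ := exists_norm_le_of_continuousOn_Ici hf0 hfc t
  obtain ⟨Ch, hCh⟩ := (isCompact_uIcc (a := 0) (b := t)).exists_bound_of_continuousOn
    hh.continuousOn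
  have hbound : ∀ u ∈ uIoc 0 t, ∀ s ∈ uIoc 0 t, ∀ θ : Icc (-r) (0 : ℝ),
      ‖f (u + θ.1 - s) * h s‖ ≤ Cf * Ch := by
    intro u hu s hs θ
    rw [norm_mul]
    refine mul_le_mul (hCf _ ?_) (hCh s (uIoc_subset_uIcc hs)) (norm_nonneg _)
      ((norm_nonneg _).trans (hCf t le_rfl))
    rw [uIoc_of_le ht] at hu hs
    linarith [hu.2, hs.1, θ.2.2]
  have hK : Measurable fun p : ℝ × ℝ × Icc (-r) (0 : ℝ) =>
      f (p.1 + p.2.2.1 - p.2.1) * h p.2.1 := by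
    fun_prop
  have hfts : IntervalIntegrable (fun s => f (t - s)) volume 0 t := by
    simpa using (hfi t 0).comp_sub_left t
  rw [intervalIntegral.integral_add (intervalIntegrable_sintegral_intervalIntegral μ hK hbound)
      (hh.intervalIntegrable _ _),
    intervalIntegral_sintegral_intervalIntegral_comm μ hK hbound]
  calc (∫ s in 0..t, sintegral μ (fun θ => ∫ u in 0..t, f (u + θ.1 - s) * h s))
        + ∫ u in 0..t, h u
      = (∫ s in 0..t, (f (t - s) - 1) * h s) + ∫ u in 0..t, h u := by
        congr 1
        refine intervalIntegral.integral_congr fun s hs => ?_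
        rw [uIcc_of_le ht] at hs
        simp only [intervalIntegral.integral_mul_const, sintegral_mul_const,
          sintegral_integral_comp_add_sub μ hf0 hfc hf hs.1 hs.2]
    _ = ∫ s in 0..t, f (t - s) * h s := by
        rw [← intervalIntegral.integral_add
          ((hfts.sub (intervalIntegrable_const (c := (1 : ℝ)))).mul_continuousOn hh.continuousOn)
          (hh.intervalIntegrable _ _)]
        congr 1
        funext s
        ring

end DelayEquation

theorem stmt_13_general (r : ℝ)
    (μ : MeasureTheory.SignedMeasure (Set.Icc (-r) (0 : ℝ)))
    (f : ℝ → ℝ)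
    (hf0 : ∀ v : ℝ, v < 0 → f v = 0)
    (hfc : ContinuousOn f (Set.Ici 0))
    (hf : ∀ t : ℝ, 0 ≤ t →
      f t = 1 + ∫ s in (0 : ℝ)..t, sintegral μ (fun θ => f (s + θ.1)))
    (h : ℝ → ℝ) (hh : ContinuousOn h (Set.Ici 0))
    (φ : ℝ → ℝ)
    (hφneg : ∀ v : ℝ, v < 0 → φ v = 0)
    (hφ : ∀ v : ℝ, 0 ≤ v → φ v = ∫ s in (0 : ℝ)..v, f (v - s) * h s) :
    ∀ t : ℝ, 0 ≤ t →
      φ t = ∫ u in (0 : ℝ)..t, (sintegral μ (fun θ => φ (u + θ.1)) + h u) := by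
  intro t ht
  have hφt : ∀ v ≤ t, φ v = ∫ s in 0..t, f (v - s) * h s := by
    intro v hv
    rcases lt_or_ge v 0 with hv0 | hv0
    · rw [hφneg v hv0, integral_comp_sub_mul_eq_zero hf0 h hv0.le ht]
    · rw [hφ v hv0, integral_comp_sub_mul_eq_of_le hf0 hfc hh hv0 hv]
  -- a continuous extension of `h` to `ℝ`, for the measurability needed by Fubini
  set h' : ℝ → ℝ := fun x => h (max x 0)
  have hh' : Continuous h' :=
    hh.comp_continuous (continuous_id.max continuous_const) fun x => le_max_right x 0
  have hh'_eq : EqOn h' h (uIcc 0 t) := fun s hs => by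
    rw [uIcc_of_le ht] at hs
    simp only [h', max_eq_left hs.1]
  have hconv : ∀ v, ∫ s in 0..t, f (v - s) * h s = ∫ s in 0..t, f (v - s) * h' s :=
    fun v => intervalIntegral.integral_congr fun s hs => by simp only [hh'_eq hs]
  rw [hφt t le_rfl, hconv, ← integral_sintegral_convolution_add μ hf0 hfc hf hh' ht]
  refine intervalIntegral.integral_congr fun u hu => ?_
  have hut : ∀ θ : Icc (-r) (0 : ℝ), u + θ.1 ≤ t := fun θ => by
    rw [uIcc_of_le ht] at hu
    linarith [hu.2, θ.2.2]
  simp only [hh'_eq hu, hφt _ (hut _), hconv]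

/-- the variation-of-constants formula (Section 5 of the paper) with zero
initial segment: the convolution `φ(v) = ∫₀ᵛ f(v−s) h(s) ds` of the fundamental solution
`f` with a continuous forcing `h` solves, in integrated form, the inhomogeneous delay
equation `φ̇(t) = ∫_{[-r,0]} φ(t+θ) dμ(θ) + h(t)`. -/
theorem stmt_13 (r : ℝ) (hr : 0 < r)
    (μ : MeasureTheory.SignedMeasure (Set.Icc (-r) (0 : ℝ)))
    (f : ℝ → ℝ)
    (hf0 : ∀ v : ℝ, v < 0 → f v = 0)
    (hfc : ContinuousOn f (Set.Ici 0))
    (hf : ∀ t : ℝ, 0 ≤ t →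
      f t = 1 + ∫ s in (0 : ℝ)..t, sintegral μ (fun θ => f (s + θ.1)))
    (h : ℝ → ℝ) (hh : ContinuousOn h (Set.Ici 0))
    (φ : ℝ → ℝ)
    (hφneg : ∀ v : ℝ, v < 0 → φ v = 0)
    (hφ : ∀ v : ℝ, 0 ≤ v → φ v = ∫ s in (0 : ℝ)..v, f (v - s) * h s) :
    ∀ t : ℝ, 0 ≤ t →
      φ t = ∫ u in (0 : ℝ)..t, (sintegral μ (fun θ => φ (u + θ.1)) + h u) :=
  stmt_13_general r μ f hf0 hfc hf h hh φ hφneg hφ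
end
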